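/- arXiv:2103.09915 — 4 statements merged into one kernel-verified Lean document; each statement's English description precedes it below -/
import Mathlib

section
/- Let A, B ∈ M_n(ℂ) be positive semidefinite and let 0 < s < 1. Then ‖A+B‖_s ≥ ‖A‖_s + ‖B‖_s (reverse Minkowski inequality for the quasinorm ‖·‖_s). -/
open scoped BigOperators Matrix ComplexOrder

/-- `‖x‖_s^s = ∑ i |x i|^s` for a real vector, using real powers (`0^s = 0` for `s ≠ 0`). -/
noncomputable def vnormPow {n : ℕ} (s : ℝ) (x : Fin n → ℝ) : ℝ := ∑ i, |x i| ^ s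

/-- `‖x‖_s = (∑ i |x i|^s)^(1/s)`. -/
noncomputable def vnorm {n : ℕ} (s : ℝ) (x : Fin n → ℝ) : ℝ := vnormPow s x ^ (1/s)

/-- The singular values of a complex matrix: the square roots of the eigenvalues of `Xᴴ * X`
(in the order provided by the spectral theorem). -/
noncomputable def sv {n : ℕ} (X : Matrix (Fin n) (Fin n) ℂ) : Fin n → ℝ :=
  fun i => Real.sqrt ((Matrix.isHermitian_conjTranspose_mul_self X).eigenvalues i)

/-- The singular values of `X` sorted in ascending order. -/
noncomputable def svAsc {n : ℕ} (X : Matrix (Fin n) (Fin n) ℂ) : Fin n → ℝ :=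
  fun i => sv X (Tuple.sort (sv X) i)

/-- The singular values of `X` sorted in descending order. -/
noncomputable def svDesc {n : ℕ} (X : Matrix (Fin n) (Fin n) ℂ) : Fin n → ℝ :=
  fun i => svAsc X i.rev

/-- `‖X‖_s^s = Tr[(XᴴX)^(s/2)] = ∑ i σ_i(X)^s`. -/
noncomputable def snormPow {n : ℕ} (s : ℝ) (X : Matrix (Fin n) (Fin n) ℂ) : ℝ := ∑ i, sv X i ^ s

/-- The Schatten `s`-(quasi/anti)norm `‖X‖_s = (Tr[(XᴴX)^(s/2)])^(1/s)`. -/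
noncomputable def snorm {n : ℕ} (s : ℝ) (X : Matrix (Fin n) (Fin n) ℂ) : ℝ := snormPow s X ^ (1/s)

/-- Real power of a hermitian matrix by the spectral functional calculus
(zero eigenvalues are sent to zero). -/
noncomputable def hermPow {n : ℕ} {X : Matrix (Fin n) (Fin n) ℂ} (hX : X.IsHermitian) (b : ℝ) :
    Matrix (Fin n) (Fin n) ℂ :=
  (hX.eigenvectorUnitary : Matrix (Fin n) (Fin n) ℂ) *
    Matrix.diagonal (fun i => ((hX.eigenvalues i ^ b : ℝ) : ℂ)) *
    (hX.eigenvectorUnitary : Matrix (Fin n) (Fin n) ℂ)ᴴ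

/-- `|X|^b := (XᴴX)^(b/2)`, the `b`-th power of the matrix absolute value `|X| = (XᴴX)^(1/2)`;
in particular `absPow X 1 = |X|`. -/
noncomputable def absPow {n : ℕ} (X : Matrix (Fin n) (Fin n) ℂ) (b : ℝ) :
    Matrix (Fin n) (Fin n) ℂ :=
  hermPow (Matrix.isHermitian_conjTranspose_mul_self X) (b/2)

/-- The logarithm of a hermitian (positive definite) matrix by the spectral functional calculus. -/
noncomputable def hermLog {n : ℕ} {X : Matrix (Fin n) (Fin n) ℂ} (hX : X.IsHermitian) :
    Matrix (Fin n) (Fin n) ℂ :=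
  (hX.eigenvectorUnitary : Matrix (Fin n) (Fin n) ℂ) *
    Matrix.diagonal (fun i => (Real.log (hX.eigenvalues i) : ℂ)) *
    (hX.eigenvectorUnitary : Matrix (Fin n) (Fin n) ℂ)ᴴ

/-- The eigenvalues of a hermitian matrix sorted in ascending order. -/
noncomputable def eigAsc {n : ℕ} {X : Matrix (Fin n) (Fin n) ℂ} (hX : X.IsHermitian) :
    Fin n → ℝ :=
  fun i => hX.eigenvalues (Tuple.sort hX.eigenvalues i)

/-- The eigenvalues of a hermitian matrix sorted in descending order. -/
noncomputable def eigDesc {n : ℕ} {X : Matrix (Fin n) (Fin n) ℂ} (hX : X.IsHermitian) :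
    Fin n → ℝ :=
  fun i => eigAsc hX i.rev

/-- Reverse Hölder building block. -/
lemma rev_holder_vec {n : ℕ} {a lam : Fin n → ℝ} (ha : ∀ i, 0 ≤ a i)
    (hlam : ∀ i, 0 ≤ lam i) (hab : ∀ i, a i ≤ lam i) {s : ℝ} (hs0 : 0 < s) (hs1 : s < 1) :
    (∑ i, a i ^ s) ^ (1/s) ≤
      (∑ i, a i * lam i ^ (s-1)) * (∑ i, lam i ^ s) ^ ((1-s)/s) := by
  have hs1' : 0 < 1 - s := by linarith
  have hpq : Real.HolderConjugate (1/s) (1/(1-s)) := by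
    refine Real.holderConjugate_iff.mpr ⟨?_, ?_⟩
    · rw [lt_div_iff₀ hs0]; linarith
    · rw [one_div, one_div, inv_inv, inv_inv]; ring
  set f : Fin n → ℝ := fun i => (a i * lam i ^ (s-1)) ^ s with hf
  set g : Fin n → ℝ := fun i => lam i ^ (s*(1-s)) with hg
  have hfn : ∀ i, 0 ≤ f i := fun i => Real.rpow_nonneg
    (mul_nonneg (ha i) (Real.rpow_nonneg (hlam i) _)) _
  have hgn : ∀ i, 0 ≤ g i := fun i => Real.rpow_nonneg (hlam i) _
  have hfg : ∀ i, a i ^ s = f i * g i := by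
    intro i
    by_cases hl : lam i = 0
    · have haz : a i = 0 := le_antisymm (hl ▸ hab i) (ha i)
      have h1 : s - 1 ≠ 0 := by linarith
      have h2 : s * (1-s) ≠ 0 := by positivity
      simp [hf, hg, haz, hl, Real.zero_rpow hs0.ne', Real.zero_rpow h1, Real.zero_rpow h2]
    · have hl' : 0 < lam i := (hlam i).lt_of_ne (Ne.symm hl)
      rw [hf, hg]
      simp only
      rw [Real.mul_rpow (ha i) (Real.rpow_nonneg (hlam i) _), ← Real.rpow_mul hl'.le,
        mul_assoc, ← Real.rpow_add hl']
      have : (s-1)*s + s*(1-s) = 0 := by ring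
      rw [this, Real.rpow_zero, mul_one]
  have holder := Real.inner_le_Lp_mul_Lq_of_nonneg Finset.univ hpq
    (fun i _ => hfn i) (fun i _ => hgn i)
  have hF : ∀ i, f i ^ (1/s) = a i * lam i ^ (s-1) := by
    intro i
    rw [hf]
    simp only
    rw [one_div, Real.rpow_rpow_inv (mul_nonneg (ha i) (Real.rpow_nonneg (hlam i) _)) hs0.ne']
  have hG : ∀ i, g i ^ (1/(1-s)) = lam i ^ s := by
    intro i
    rw [hg]
    simp only
    rw [← Real.rpow_mul (hlam i)]
    congr 1
    field_simp
  have key : (∑ i, a i ^ s) ≤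
      (∑ i, a i * lam i ^ (s-1)) ^ s * (∑ i, lam i ^ s) ^ (1-s) := by
    calc (∑ i, a i ^ s) = ∑ i, f i * g i := by simp_rw [hfg]
      _ ≤ (∑ i, f i ^ (1/s)) ^ (1/(1/s)) * (∑ i, g i ^ (1/(1-s))) ^ (1/(1/(1-s))) := holder
      _ = (∑ i, a i * lam i ^ (s-1)) ^ s * (∑ i, lam i ^ s) ^ (1-s) := by
          simp_rw [hF, hG, one_div_one_div]
  have hXn : 0 ≤ ∑ i, a i * lam i ^ (s-1) :=
    Finset.sum_nonneg fun i _ => mul_nonneg (ha i) (Real.rpow_nonneg (hlam i) _)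
  have hYn : 0 ≤ ∑ i, lam i ^ s := Finset.sum_nonneg fun i _ => Real.rpow_nonneg (hlam i) _
  calc (∑ i, a i ^ s) ^ (1/s)
      ≤ ((∑ i, a i * lam i ^ (s-1)) ^ s * (∑ i, lam i ^ s) ^ (1-s)) ^ (1/s) :=
        Real.rpow_le_rpow (Finset.sum_nonneg fun i _ => Real.rpow_nonneg (ha i) _) key
          (by positivity)
    _ = (∑ i, a i * lam i ^ (s-1)) * (∑ i, lam i ^ s) ^ ((1-s)/s) := by
        rw [Real.mul_rpow (Real.rpow_nonneg hXn _) (Real.rpow_nonneg hYn _),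
          one_div, Real.rpow_rpow_inv hXn hs0.ne', ← Real.rpow_mul hYn, ← div_eq_mul_inv]


/-- Reverse Minkowski for vectors. -/
lemma rev_mink_vec {n : ℕ} {a b : Fin n → ℝ} (ha : ∀ i, 0 ≤ a i) (hb : ∀ i, 0 ≤ b i)
    {s : ℝ} (hs0 : 0 < s) (hs1 : s < 1) :
    (∑ i, a i ^ s) ^ (1/s) + (∑ i, b i ^ s) ^ (1/s) ≤ (∑ i, (a i + b i) ^ s) ^ (1/s) := by
  set lam : Fin n → ℝ := fun i => a i + b i with hlamdef
  have hlam : ∀ i, 0 ≤ lam i := fun i => add_nonneg (ha i) (hb i)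
  have hS0 : 0 ≤ ∑ i, lam i ^ s := Finset.sum_nonneg fun i _ => Real.rpow_nonneg (hlam i) _
  rcases eq_or_lt_of_le hS0 with h0 | hpos
  · have hz : ∀ i, lam i = 0 := by
      intro i
      have hmem := (Finset.sum_eq_zero_iff_of_nonneg
        (fun j (_ : j ∈ Finset.univ) => Real.rpow_nonneg (hlam j) s)).mp h0.symm i
        (Finset.mem_univ i)
      by_contra hne
      have hpos' : 0 < lam i := (hlam i).lt_of_ne (Ne.symm hne)
      exact absurd hmem (ne_of_gt (Real.rpow_pos_of_pos hpos' s))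
    have haz : ∀ i, a i = 0 := fun i => by
      have := hz i; have := ha i; have := hb i; simp only [hlamdef] at *; linarith
    have hbz : ∀ i, b i = 0 := fun i => by
      have := hz i; have := ha i; have := hb i; simp only [hlamdef] at *; linarith
    simp [haz, hbz, Real.zero_rpow hs0.ne', Real.zero_rpow (show s⁻¹ ≠ 0 by positivity)]
  · have h1 := rev_holder_vec ha hlam (fun i => le_add_of_nonneg_right (hb i)) hs0 hs1
    have h2 := rev_holder_vec hb hlam (fun i => le_add_of_nonneg_left (ha i)) hs0 hs1
    have hsum : (∑ i, a i * lam i ^ (s-1)) + (∑ i, b i * lam i ^ (s-1))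
        = ∑ i, lam i ^ s := by
      rw [← Finset.sum_add_distrib]
      refine Finset.sum_congr rfl fun i _ => ?_
      rw [← add_mul]
      rcases eq_or_lt_of_le (hlam i) with h | h
      · rw [hlamdef]; simp only
        rw [show a i + b i = lam i from rfl, ← h, Real.zero_rpow (by linarith : s - 1 ≠ 0),
          Real.zero_rpow hs0.ne', mul_zero]
      · rw [show a i + b i = lam i from rfl]
        nth_rewrite 1 [← Real.rpow_one (lam i)]
        rw [← Real.rpow_add h]
        norm_num
    calc (∑ i, a i ^ s) ^ (1/s) + (∑ i, b i ^ s) ^ (1/s)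
        ≤ ((∑ i, a i * lam i ^ (s-1)) + (∑ i, b i * lam i ^ (s-1)))
            * (∑ i, lam i ^ s) ^ ((1-s)/s) := by
          rw [add_mul]; exact add_le_add h1 h2
      _ = (∑ i, lam i ^ s) ^ (1/s) := by
          rw [hsum]
          nth_rewrite 1 [← Real.rpow_one (∑ i, lam i ^ s)]
          rw [← Real.rpow_add hpos]
          congr 1
          field_simp
          ring
      _ = (∑ i, (a i + b i) ^ s) ^ (1/s) := rfl

/-- Jensen / doubly-stochastic step. -/
lemma jensen_step {n : ℕ} (w : Fin n → Fin n → ℝ) (α : Fin n → ℝ)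
    (hw : ∀ i j, 0 ≤ w i j) (hrow : ∀ i, ∑ j, w i j = 1) (hcol : ∀ j, ∑ i, w i j = 1)
    (hα : ∀ j, 0 ≤ α j) {s : ℝ} (hs0 : 0 < s) (hs1 : s < 1) :
    ∑ j, α j ^ s ≤ ∑ i, (∑ j, w i j * α j) ^ s := by
  have hp : (1:ℝ) ≤ 1/s := by rw [le_div_iff₀ hs0]; linarith
  have key : ∀ i, ∑ j, w i j * α j ^ s ≤ (∑ j, w i j * α j) ^ s := by
    intro i
    have h := Real.inner_le_weight_mul_Lp_of_nonneg Finset.univ hp (w i)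
      (fun j => α j ^ s) (hw i) (fun j => Real.rpow_nonneg (hα j) s)
    have e1 : ((1:ℝ)/s)⁻¹ = s := by rw [one_div, inv_inv]
    have e2 : ∀ j, (α j ^ s) ^ ((1:ℝ)/s) = α j := fun j => by
      rw [one_div, Real.rpow_rpow_inv (hα j) hs0.ne']
    simp only [e1, e2, hrow i, Real.one_rpow, one_mul] at h
    exact h
  calc ∑ j, α j ^ s = ∑ j, (∑ i, w i j) * α j ^ s := by
        refine Finset.sum_congr rfl fun j _ => ?_; rw [hcol j, one_mul]
    _ = ∑ i, ∑ j, w i j * α j ^ s := by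
        rw [Finset.sum_comm]
        exact Finset.sum_congr rfl fun j _ => Finset.sum_mul _ _ _
    _ ≤ ∑ i, (∑ j, w i j * α j) ^ s := Finset.sum_le_sum fun i _ => key i

lemma sv_nonneg {n : ℕ} (X : Matrix (Fin n) (Fin n) ℂ) (i : Fin n) : 0 ≤ sv X i :=
  Real.sqrt_nonneg _

lemma mulVec_eigB {n : ℕ} {A : Matrix (Fin n) (Fin n) ℂ} (hA : A.PosSemidef) (j : Fin n) :
    A *ᵥ ⇑((Matrix.isHermitian_conjTranspose_mul_self A).eigenvectorBasis j)
      = (sv A j : ℂ) • ⇑((Matrix.isHermitian_conjTranspose_mul_self A).eigenvectorBasis j) := by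
  set hM := Matrix.isHermitian_conjTranspose_mul_self A with hMdef
  set v : Fin n → ℂ := ⇑(hM.eigenvectorBasis j) with hv
  set μ : ℝ := hM.eigenvalues j with hμdef
  have hμ : 0 ≤ μ := (Matrix.posSemidef_conjTranspose_mul_self A).eigenvalues_nonneg j
  set t : ℝ := Real.sqrt μ with htdef
  have ht : 0 ≤ t := Real.sqrt_nonneg μ
  have ht2 : t ^ 2 = μ := Real.sq_sqrt hμ
  have hMv : (Aᴴ * A) *ᵥ v = (μ : ℂ) • v := by
    rw [hM.mulVec_eigenvectorBasis j, RCLike.real_smul_eq_coe_smul (K := ℂ)]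
    rfl
  have hAH : Aᴴ = A := hA.isHermitian
  have hgoal : A *ᵥ v = (t : ℂ) • v → A *ᵥ v = ((sv A j : ℝ) : ℂ) • v := fun h => h
  apply hgoal
  rcases eq_or_lt_of_le ht with h0 | hpos
  · -- t = 0, hence μ = 0 and A v = 0
    have hμ0 : μ = 0 := by rw [← ht2, ← h0]; ring
    have h1 : star (A *ᵥ v) ⬝ᵥ (A *ᵥ v) = 0 := by
      rw [Matrix.star_mulVec, ← Matrix.dotProduct_mulVec, Matrix.mulVec_mulVec, hMv, hμ0]
      simp
    have h2 : A *ᵥ v = 0 := dotProduct_star_self_eq_zero.mp h1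
    rw [h2, ← h0]
    simp
  · set P := A + Matrix.diagonal (fun _ : Fin n => (t : ℂ)) with hP
    have hPd : P.PosDef := by
      refine Matrix.PosDef.posSemidef_add hA (Matrix.PosDef.diagonal fun _ => ?_)
      exact_mod_cast hpos
    set w : Fin n → ℂ := A *ᵥ v - (t : ℂ) • v with hw
    have hdiag : Matrix.diagonal (fun _ : Fin n => (t : ℂ)) *ᵥ w = (t : ℂ) • w := by
      funext i
      simp [Matrix.mulVec_diagonal]
    have hAw : A *ᵥ w = (A * A) *ᵥ v - (t : ℂ) • (A *ᵥ v) := by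
      rw [hw, Matrix.mulVec_sub, Matrix.mulVec_smul, Matrix.mulVec_mulVec]
    have hAA : (A * A) *ᵥ v = ((t : ℂ) ^ 2) • v := by
      have hc : ((t : ℂ)) ^ 2 = (μ : ℂ) := by rw [← Complex.ofReal_pow, ht2]
      rw [show A * A = Aᴴ * A by rw [hAH], hMv, hc]
    have hPw : P *ᵥ w = 0 := by
      rw [hP, Matrix.add_mulVec, hdiag, hAw, hAA, hw, smul_sub, smul_smul]
      ring_nf
    have hw0 : w = 0 := by
      by_contra hne
      have hlt := hPd.dotProduct_mulVec_pos hne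
      rw [hPw, dotProduct_zero] at hlt
      exact lt_irrefl 0 hlt
    have := sub_eq_zero.mp (hw ▸ hw0)
    exact this

lemma spec_decomp {n : ℕ} {A : Matrix (Fin n) (Fin n) ℂ} (hA : A.PosSemidef) :
    A = ((Matrix.isHermitian_conjTranspose_mul_self A).eigenvectorUnitary :
          Matrix (Fin n) (Fin n) ℂ) *
        Matrix.diagonal (fun i => (sv A i : ℂ)) *
        star ((Matrix.isHermitian_conjTranspose_mul_self A).eigenvectorUnitary :
          Matrix (Fin n) (Fin n) ℂ) := by
  set hM := Matrix.isHermitian_conjTranspose_mul_self A with hMdef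
  set U : Matrix (Fin n) (Fin n) ℂ := (hM.eigenvectorUnitary : Matrix (Fin n) (Fin n) ℂ)
    with hU
  have key : A * U = U * Matrix.diagonal (fun i => (sv A i : ℂ)) := by
    ext i j
    have h := congrFun (mulVec_eigB hA j) i
    simp only [Matrix.mulVec, dotProduct, Pi.smul_apply, smul_eq_mul] at h
    rw [Matrix.mul_apply, Matrix.mul_diagonal]
    simp only [hU, Matrix.IsHermitian.eigenvectorUnitary_apply]
    rw [h]
    ring
  have hUU : U * star U = 1 := Matrix.mem_unitaryGroup_iff.mp hM.eigenvectorUnitary.2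
  calc A = A * (U * star U) := by rw [hUU, mul_one]
    _ = (A * U) * star U := by rw [mul_assoc]
    _ = U * Matrix.diagonal (fun i => (sv A i : ℂ)) * star U := by rw [key]

lemma diag_rep {n : ℕ} {A T : Matrix (Fin n) (Fin n) ℂ} (hA : A.PosSemidef)
    (hT : T.PosSemidef) {s : ℝ} (hs0 : 0 < s) (hs1 : s < 1) :
    ∃ a : Fin n → ℝ, (∀ i, 0 ≤ a i) ∧
      (∀ i, (star ((Matrix.isHermitian_conjTranspose_mul_self T).eigenvectorUnitary :
          Matrix (Fin n) (Fin n) ℂ) * A *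
          ((Matrix.isHermitian_conjTranspose_mul_self T).eigenvectorUnitary :
          Matrix (Fin n) (Fin n) ℂ)) i i = (a i : ℂ)) ∧
      ∑ j, sv A j ^ s ≤ ∑ i, a i ^ s := by
  classical
  set U : Matrix (Fin n) (Fin n) ℂ :=
    ((Matrix.isHermitian_conjTranspose_mul_self T).eigenvectorUnitary :
      Matrix (Fin n) (Fin n) ℂ) with hU
  set V : Matrix (Fin n) (Fin n) ℂ :=
    ((Matrix.isHermitian_conjTranspose_mul_self A).eigenvectorUnitary :
      Matrix (Fin n) (Fin n) ℂ) with hV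
  have hUU : U * star U = 1 :=
    Matrix.mem_unitaryGroup_iff.mp (Matrix.isHermitian_conjTranspose_mul_self T).eigenvectorUnitary.2
  have hUU' : star U * U = 1 :=
    Matrix.mem_unitaryGroup_iff'.mp (Matrix.isHermitian_conjTranspose_mul_self T).eigenvectorUnitary.2
  have hVV : V * star V = 1 :=
    Matrix.mem_unitaryGroup_iff.mp (Matrix.isHermitian_conjTranspose_mul_self A).eigenvectorUnitary.2
  have hVV' : star V * V = 1 :=
    Matrix.mem_unitaryGroup_iff'.mp (Matrix.isHermitian_conjTranspose_mul_self A).eigenvectorUnitary.2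
  set M : Matrix (Fin n) (Fin n) ℂ := star V * U with hM
  have hMM' : star M * M = 1 := by
    rw [hM, star_mul, star_star, mul_assoc, ← mul_assoc V (star V) U, hVV, one_mul, hUU']
  have hMM : M * star M = 1 := by
    rw [hM, star_mul, star_star, mul_assoc, ← mul_assoc U (star U) V, hUU, one_mul, hVV']
  set w : Fin n → Fin n → ℝ := fun i j => Complex.normSq (M j i) with hw
  have hwn : ∀ i j, 0 ≤ w i j := fun i j => Complex.normSq_nonneg _
  have hrow : ∀ i, ∑ j, w i j = 1 := by
    intro i
    have h := congrFun (congrFun hMM' i) i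
    rw [Matrix.mul_apply, Matrix.one_apply_eq] at h
    have h2 : ∀ j, (star M) i j * M j i = ((w i j : ℝ) : ℂ) := by
      intro j
      rw [Matrix.star_apply, Complex.star_def, mul_comm, Complex.mul_conj]
    rw [Finset.sum_congr rfl (fun j _ => h2 j)] at h
    exact_mod_cast h
  have hcol : ∀ j, ∑ i, w i j = 1 := by
    intro j
    have h := congrFun (congrFun hMM j) j
    rw [Matrix.mul_apply, Matrix.one_apply_eq] at h
    have h2 : ∀ i, M j i * (star M) i j = ((w i j : ℝ) : ℂ) := by
      intro i
      rw [Matrix.star_apply, Complex.star_def, Complex.mul_conj]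
    rw [Finset.sum_congr rfl (fun i _ => h2 i)] at h
    exact_mod_cast h
  refine ⟨fun i => ∑ j, w i j * sv A j, fun i => Finset.sum_nonneg fun j _ =>
    mul_nonneg (hwn i j) (sv_nonneg A j), ?_, ?_⟩
  · intro i
    have hKA : star U * A * U = star M * Matrix.diagonal (fun k => (sv A k : ℂ)) * M := by
      conv_lhs => rw [spec_decomp hA]
      rw [← hV, hM, star_mul, star_star]
      simp only [mul_assoc]
    rw [hKA, Matrix.mul_apply]
    have h3 : ∀ k, (star M * Matrix.diagonal (fun k => (sv A k : ℂ))) i k * M k i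
        = ((w i k * sv A k : ℝ) : ℂ) := by
      intro k
      rw [Matrix.mul_diagonal, Matrix.star_apply, Complex.star_def]
      have : (starRingEnd ℂ) (M k i) * (sv A k : ℂ) * M k i
          = (sv A k : ℂ) * (M k i * (starRingEnd ℂ) (M k i)) := by ring
      rw [this, Complex.mul_conj]
      push_cast
      ring
    rw [Finset.sum_congr rfl (fun k _ => h3 k)]
    push_cast
    rfl
  · exact jensen_step w (sv A) hwn hrow hcol (sv_nonneg A) hs0 hs1


/-- reverse Minkowski inequality for positive semidefinite matrices, `0 < s < 1`. -/
theorem reverse_minkowski (n : ℕ) (A B : Matrix (Fin n) (Fin n) ℂ)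
    (hA : A.PosSemidef) (hB : B.PosSemidef) (s : ℝ) (hs0 : 0 < s) (hs1 : s < 1) :
    snorm s A + snorm s B ≤ snorm s (A + B) := by
  classical
  have hT : (A + B).PosSemidef := hA.add hB
  obtain ⟨a, ha0, haD, haS⟩ := diag_rep hA hT hs0 hs1
  obtain ⟨b, hb0, hbD, hbS⟩ := diag_rep hB hT hs0 hs1
  set U : Matrix (Fin n) (Fin n) ℂ :=
    ((Matrix.isHermitian_conjTranspose_mul_self (A + B)).eigenvectorUnitary :
      Matrix (Fin n) (Fin n) ℂ) with hU
  have hUU' : star U * U = 1 :=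
    Matrix.mem_unitaryGroup_iff'.mp
      (Matrix.isHermitian_conjTranspose_mul_self (A + B)).eigenvectorUnitary.2
  have hTspec : star U * (A + B) * U = Matrix.diagonal (fun i => (sv (A + B) i : ℂ)) := by
    conv_lhs => rw [spec_decomp hT]
    rw [← hU]
    rw [show star U * (U * Matrix.diagonal (fun i => (sv (A + B) i : ℂ)) * star U) * U
        = (star U * U) * Matrix.diagonal (fun i => (sv (A + B) i : ℂ)) * (star U * U) from by
      simp only [mul_assoc], hUU', one_mul, mul_one]
  have hab : ∀ i, a i + b i = sv (A + B) i := by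
    intro i
    have hadd : star U * A * U + star U * B * U = star U * (A + B) * U := by
      rw [mul_add, add_mul]
    have h := congrFun (congrFun hadd i) i
    rw [Matrix.add_apply, haD i, hbD i, hTspec, Matrix.diagonal_apply_eq] at h
    exact_mod_cast h
  have hlam : ∑ i, (a i + b i) ^ s = ∑ i, sv (A + B) i ^ s :=
    Finset.sum_congr rfl fun i _ => by rw [hab i]
  have h1s : (0:ℝ) ≤ 1/s := by positivity
  calc snorm s A + snorm s B
      ≤ (∑ i, a i ^ s) ^ (1/s) + (∑ i, b i ^ s) ^ (1/s) := by
        refine add_le_add ?_ ?_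
        · exact Real.rpow_le_rpow
            (Finset.sum_nonneg fun i _ => Real.rpow_nonneg (sv_nonneg A i) s) haS h1s
        · exact Real.rpow_le_rpow
            (Finset.sum_nonneg fun i _ => Real.rpow_nonneg (sv_nonneg B i) s) hbS h1s
    _ ≤ (∑ i, (a i + b i) ^ s) ^ (1/s) := rev_mink_vec ha0 hb0 hs0 hs1
    _ = snorm s (A + B) := by rw [hlam]; rfl
end

section
/- Let A, B ∈ M_n(ℂ) be positive definite and let A β₀ B := exp((log A + log B)/2) be their geometric mean. Then for every k = 1, …, n: (1/k) ∑_{j=1}^k λ_j(A β₀ B) ≥ (∏_{j=1}^k λ_j(A))^{1/(2k)} · (∏_{j=1}^k λ_{n+1−j}(B))^{1/(2k)}, where λ_1 ≥ … ≥ λ_n denote eigenvalues in descending order. -/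
open scoped BigOperators Matrix ComplexOrder


section Aux
variable {n k : ℕ}

/-- Combinatorial lemma: weighted sum with weights in [0,1] summing to k is at most
the sum of the k largest values of a monotone tuple. -/
lemma sum_mul_le_topk (hk1 : 1 ≤ k) (hkn : k ≤ n) (g : Fin n → ℝ) (hg : Monotone g)
    (t : Fin n → ℝ) (ht0 : ∀ i, 0 ≤ t i) (ht1 : ∀ i, t i ≤ 1) (hts : ∑ i, t i = k) :
    ∑ i, g i * t i ≤ ∑ j : Fin k, g ((Fin.castLE hkn j).rev) := by
  classical
  have hn : 0 < n := lt_of_lt_of_le hk1 hkn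
  have hp : n - k < n := by omega
  set p : Fin n := ⟨n - k, hp⟩ with hpdef
  set c := g p with hcdef
  set T : Finset (Fin n) := Finset.univ.filter (fun i => n - k ≤ i.val) with hT
  have hmem : ∀ i : Fin n, i ∈ T ↔ n - k ≤ i.val := by
    intro i; simp [hT]
  have hinj : Function.Injective (fun j : Fin k => (Fin.castLE hkn j).rev) :=
    Fin.rev_injective.comp (Fin.castLE_injective hkn)
  have hTimage : T = Finset.image (fun j : Fin k => (Fin.castLE hkn j).rev) Finset.univ := by
    ext i
    simp only [Finset.mem_image, Finset.mem_univ, true_and, hmem i]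
    constructor
    · intro hi
      refine ⟨⟨n - 1 - i.val, by omega⟩, ?_⟩
      ext
      simp only [Fin.val_rev, Fin.coe_castLE]
      omega
    · rintro ⟨j, rfl⟩
      simp only [Fin.val_rev, Fin.coe_castLE]
      omega
  have hcard : T.card = k := by
    rw [hTimage, Finset.card_image_of_injective _ hinj, Finset.card_univ, Fintype.card_fin]
  have hRHS : ∑ j : Fin k, g ((Fin.castLE hkn j).rev) = ∑ i ∈ T, g i := by
    rw [hTimage, Finset.sum_image (fun a _ b _ h => hinj h)]
  have key1 : ∀ i ∈ T, g i * t i - g i - c * t i + c ≤ 0 := by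
    intro i hi
    have h1 : c ≤ g i := by
      apply hg
      rw [Fin.le_def]
      simpa [hpdef] using (hmem i).mp hi
    nlinarith [ht1 i]
  have key2 : ∀ i ∈ Tᶜ, g i * t i - c * t i ≤ 0 := by
    intro i hi
    have h2 : i.val < n - k := by
      have := Finset.mem_compl.mp hi
      rw [hmem i] at this; omega
    have h1 : g i ≤ c := by
      apply hg
      rw [Fin.le_def]
      simp only [hpdef]
      omega
    nlinarith [ht0 i]
  have E1 : ∑ i ∈ T, (g i * t i) - ∑ i ∈ T, g i - c * ∑ i ∈ T, t i + c * k ≤ 0 := by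
    have h := Finset.sum_nonpos key1
    have hexp : ∑ i ∈ T, (g i * t i - g i - c * t i + c)
        = ∑ i ∈ T, (g i * t i) - ∑ i ∈ T, g i - c * ∑ i ∈ T, t i + c * k := by
      rw [Finset.sum_add_distrib, Finset.sum_sub_distrib, Finset.sum_sub_distrib,
        Finset.sum_const, ← Finset.mul_sum, hcard, nsmul_eq_mul, mul_comm (k : ℝ) c]
    linarith [hexp ▸ h]
  have E2 : ∑ i ∈ Tᶜ, (g i * t i) - c * ∑ i ∈ Tᶜ, t i ≤ 0 := by
    have h := Finset.sum_nonpos key2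
    rw [Finset.sum_sub_distrib, ← Finset.mul_sum] at h
    linarith
  have E3 : ∑ i ∈ T, t i + ∑ i ∈ Tᶜ, t i = k := by
    rw [Finset.sum_add_sum_compl]; exact hts
  have hsplit : ∑ i, g i * t i = ∑ i ∈ T, (g i * t i) + ∑ i ∈ Tᶜ, (g i * t i) :=
    (Finset.sum_add_sum_compl T _).symm
  have E4 : c * ∑ i ∈ T, t i + c * ∑ i ∈ Tᶜ, t i = c * k := by
    rw [← mul_add, E3]
  rw [hRHS, hsplit]
  linarith

/-- Dual: the weighted sum is at least the sum of the k smallest values. -/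
lemma botk_le_sum_mul (hk1 : 1 ≤ k) (hkn : k ≤ n) (g : Fin n → ℝ) (hg : Monotone g)
    (t : Fin n → ℝ) (ht0 : ∀ i, 0 ≤ t i) (ht1 : ∀ i, t i ≤ 1) (hts : ∑ i, t i = k) :
    ∑ j : Fin k, g (Fin.castLE hkn j) ≤ ∑ i, g i * t i := by
  classical
  have hn : 0 < n := lt_of_lt_of_le hk1 hkn
  have hp : k - 1 < n := by omega
  set p : Fin n := ⟨k - 1, hp⟩ with hpdef
  set c := g p with hcdef
  set T : Finset (Fin n) := Finset.univ.filter (fun i => i.val < k) with hT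
  have hmem : ∀ i : Fin n, i ∈ T ↔ i.val < k := by
    intro i; simp [hT]
  have hinj : Function.Injective (fun j : Fin k => Fin.castLE hkn j) :=
    Fin.castLE_injective hkn
  have hTimage : T = Finset.image (fun j : Fin k => Fin.castLE hkn j) Finset.univ := by
    ext i
    simp only [Finset.mem_image, Finset.mem_univ, true_and, hmem i]
    constructor
    · intro hi
      exact ⟨⟨i.val, hi⟩, by ext; simp⟩
    · rintro ⟨j, rfl⟩
      simpa using j.isLt
  have hcard : T.card = k := by
    rw [hTimage, Finset.card_image_of_injective _ hinj, Finset.card_univ, Fintype.card_fin]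
  have hRHS : ∑ j : Fin k, g (Fin.castLE hkn j) = ∑ i ∈ T, g i := by
    rw [hTimage, Finset.sum_image (fun a _ b _ h => hinj h)]
  have key1 : ∀ i ∈ T, 0 ≤ g i * t i - g i - c * t i + c := by
    intro i hi
    have h1 : g i ≤ c := by
      apply hg
      rw [Fin.le_def]
      have := (hmem i).mp hi
      simp only [hpdef]
      omega
    nlinarith [ht1 i]
  have key2 : ∀ i ∈ Tᶜ, 0 ≤ g i * t i - c * t i := by
    intro i hi
    have h2 : k ≤ i.val := by
      have := Finset.mem_compl.mp hi
      rw [hmem i] at this; omega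
    have h1 : c ≤ g i := by
      apply hg
      rw [Fin.le_def]
      simp only [hpdef]
      omega
    nlinarith [ht0 i]
  have E1 : 0 ≤ ∑ i ∈ T, (g i * t i) - ∑ i ∈ T, g i - c * ∑ i ∈ T, t i + c * k := by
    have h := Finset.sum_nonneg key1
    have hexp : ∑ i ∈ T, (g i * t i - g i - c * t i + c)
        = ∑ i ∈ T, (g i * t i) - ∑ i ∈ T, g i - c * ∑ i ∈ T, t i + c * k := by
      rw [Finset.sum_add_distrib, Finset.sum_sub_distrib, Finset.sum_sub_distrib,
        Finset.sum_const, ← Finset.mul_sum, hcard, nsmul_eq_mul, mul_comm (k : ℝ) c]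
    linarith [hexp ▸ h]
  have E2 : 0 ≤ ∑ i ∈ Tᶜ, (g i * t i) - c * ∑ i ∈ Tᶜ, t i := by
    have h := Finset.sum_nonneg key2
    rw [Finset.sum_sub_distrib, ← Finset.mul_sum] at h
    linarith
  have E3 : ∑ i ∈ T, t i + ∑ i ∈ Tᶜ, t i = k := by
    rw [Finset.sum_add_sum_compl]; exact hts
  have hsplit : ∑ i, g i * t i = ∑ i ∈ T, (g i * t i) + ∑ i ∈ Tᶜ, (g i * t i) :=
    (Finset.sum_add_sum_compl T _).symm
  have E4 : c * ∑ i ∈ T, t i + c * ∑ i ∈ Tᶜ, t i = c * k := by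
    rw [← mul_add, E3]
  rw [hRHS, hsplit]
  linarith

/-- Two monotone real tuples with the same multiset of values are equal. -/
lemma monotone_tuple_unique (f g : Fin n → ℝ) (hf : Monotone f) (hg : Monotone g)
    (h : Multiset.map f Finset.univ.val = Multiset.map g Finset.univ.val) : f = g := by
  have hlist : ∀ h : Fin n → ℝ, Multiset.map h Finset.univ.val = ↑(List.ofFn h) := by
    intro h
    rw [List.ofFn_eq_map, Fin.univ_def]
    rfl
  apply List.ofFn_injective
  refine List.Perm.eq_of_sortedLE (List.sortedLE_ofFn_iff.mpr hf)
    (List.sortedLE_ofFn_iff.mpr hg) ?_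
  rw [← Multiset.coe_eq_coe, ← hlist, ← hlist]
  exact h

/-- Composing with a permutation doesn't change the multiset of values. -/
lemma multiset_map_comp_perm (f : Fin n → ℝ) (σ : Equiv.Perm (Fin n)) :
    Multiset.map (f ∘ σ) Finset.univ.val = Multiset.map f Finset.univ.val := by
  have h1 : Multiset.map (⇑σ) Finset.univ.val = Finset.univ.val := by
    have := Finset.map_univ_equiv σ
    calc Multiset.map (⇑σ) Finset.univ.val = (Finset.univ.map σ.toEmbedding).val := by
          rw [Finset.map_val]; rfl
      _ = Finset.univ.val := by rw [this]
  calc Multiset.map (f ∘ σ) Finset.univ.val = Multiset.map f (Multiset.map (⇑σ) Finset.univ.val) := by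
        rw [Multiset.map_map]
    _ = Multiset.map f Finset.univ.val := by rw [h1]

end Aux


section MatAux
variable {n : ℕ}

/-- Conjugating a real diagonal by a unitary gives a hermitian matrix. -/
lemma isHermitian_conj_diag (u : Matrix.unitaryGroup (Fin n) ℂ) (d : Fin n → ℝ) :
    ((u : Matrix (Fin n) (Fin n) ℂ) * Matrix.diagonal (fun i => (d i : ℂ)) *
      (u : Matrix (Fin n) (Fin n) ℂ)ᴴ).IsHermitian := by
  have hd : (star fun i => ((d i : ℝ) : ℂ)) = fun i => ((d i : ℝ) : ℂ) := by
    funext i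
    simp [Pi.star_apply, Complex.star_def, Complex.conj_ofReal]
  unfold Matrix.IsHermitian
  simp only [Matrix.conjTranspose_mul, Matrix.conjTranspose_conjTranspose,
    Matrix.diagonal_conjTranspose, hd, Matrix.mul_assoc]

lemma unitary_mul_star (u : Matrix.unitaryGroup (Fin n) ℂ) :
    (u : Matrix (Fin n) (Fin n) ℂ) * (u : Matrix (Fin n) (Fin n) ℂ)ᴴ = 1 := by
  rw [← Matrix.star_eq_conjTranspose]
  exact Unitary.coe_mul_star_self u

lemma unitary_star_mul (u : Matrix.unitaryGroup (Fin n) ℂ) :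
    (u : Matrix (Fin n) (Fin n) ℂ)ᴴ * (u : Matrix (Fin n) (Fin n) ℂ) = 1 := by
  rw [← Matrix.star_eq_conjTranspose]
  exact Unitary.coe_star_mul_self u

/-- The main trace formula: `Tr[(V E_S Vᴴ)(U D Uᴴ)] = ∑ i, d i * t i` with
`t i = ∑ j ∈ S, |ous (Vᴴ U) j i|²`. -/
lemma trace_proj (U V : Matrix.unitaryGroup (Fin n) ℂ) (d : Fin n → ℝ) (S : Finset (Fin n)) :
    Matrix.trace (((V : Matrix (Fin n) (Fin n) ℂ) *
        Matrix.diagonal (fun i => if i ∈ S then (1:ℂ) else 0) * (V : Matrix (Fin n) (Fin n) ℂ)ᴴ) *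
      ((U : Matrix (Fin n) (Fin n) ℂ) * Matrix.diagonal (fun i => (d i : ℂ)) *
        (U : Matrix (Fin n) (Fin n) ℂ)ᴴ)) =
    ((∑ i, d i * ∑ j ∈ S, Complex.normSq
        (((V : Matrix (Fin n) (Fin n) ℂ)ᴴ * (U : Matrix (Fin n) (Fin n) ℂ)) j i) : ℝ) : ℂ) := by
  classical
  set M : Matrix (Fin n) (Fin n) ℂ := (V : Matrix (Fin n) (Fin n) ℂ)ᴴ * (U : Matrix (Fin n) (Fin n) ℂ) with hM
  set E : Matrix (Fin n) (Fin n) ℂ := Matrix.diagonal (fun i => if i ∈ S then (1:ℂ) else 0) with hE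
  set D : Matrix (Fin n) (Fin n) ℂ := Matrix.diagonal (fun i => (d i : ℂ)) with hD
  have hMH : Mᴴ = (U : Matrix (Fin n) (Fin n) ℂ)ᴴ * (V : Matrix (Fin n) (Fin n) ℂ) := by
    rw [hM, Matrix.conjTranspose_mul, Matrix.conjTranspose_conjTranspose]
  have hstep : ((V : Matrix (Fin n) (Fin n) ℂ) * E * (V : Matrix (Fin n) (Fin n) ℂ)ᴴ) *
      ((U : Matrix (Fin n) (Fin n) ℂ) * D * (U : Matrix (Fin n) (Fin n) ℂ)ᴴ)
      = (V : Matrix (Fin n) (Fin n) ℂ) * (E * (M * D * Mᴴ)) * (V : Matrix (Fin n) (Fin n) ℂ)ᴴ := by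
    rw [hM, hMH]
    have h1 := unitary_mul_star V
    -- expand and use V Vᴴ = 1 at the right end
    calc (V : Matrix (Fin n) (Fin n) ℂ) * E * (V : Matrix (Fin n) (Fin n) ℂ)ᴴ *
        ((U : Matrix (Fin n) (Fin n) ℂ) * D * (U : Matrix (Fin n) (Fin n) ℂ)ᴴ)
        = (V : Matrix (Fin n) (Fin n) ℂ) * E * (V : Matrix (Fin n) (Fin n) ℂ)ᴴ *
          ((U : Matrix (Fin n) (Fin n) ℂ) * D * (U : Matrix (Fin n) (Fin n) ℂ)ᴴ) *
          ((V : Matrix (Fin n) (Fin n) ℂ) * (V : Matrix (Fin n) (Fin n) ℂ)ᴴ) := by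
          rw [h1, mul_one]
      _ = (V : Matrix (Fin n) (Fin n) ℂ) * (E * ((V : Matrix (Fin n) (Fin n) ℂ)ᴴ *
            (U : Matrix (Fin n) (Fin n) ℂ) * D * ((U : Matrix (Fin n) (Fin n) ℂ)ᴴ *
            (V : Matrix (Fin n) (Fin n) ℂ)))) * (V : Matrix (Fin n) (Fin n) ℂ)ᴴ := by
          simp only [Matrix.mul_assoc]
      _ = _ := by simp only [Matrix.mul_assoc]
  rw [hstep]
  have htr : Matrix.trace ((V : Matrix (Fin n) (Fin n) ℂ) * (E * (M * D * Mᴴ)) *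
      (V : Matrix (Fin n) (Fin n) ℂ)ᴴ) = Matrix.trace (E * (M * D * Mᴴ)) := by
    rw [Matrix.trace_mul_cycle, ← Matrix.mul_assoc, unitary_star_mul V, one_mul]
  rw [htr]
  have hWjj : ∀ j, (M * D * Mᴴ) j j = ∑ i, ((d i : ℂ) * (Complex.normSq (M j i) : ℂ)) := by
    intro j
    rw [Matrix.mul_apply]
    apply Finset.sum_congr rfl
    intro i _
    rw [Matrix.mul_diagonal, Matrix.conjTranspose_apply]
    simp only [Complex.star_def]
    rw [mul_comm (M j i), mul_assoc, Complex.mul_conj]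
  have htrE : Matrix.trace (E * (M * D * Mᴴ)) = ∑ j ∈ S, (M * D * Mᴴ) j j := by
    rw [Matrix.trace]
    simp only [Matrix.diag, hE, Matrix.diagonal_mul, ite_mul, one_mul, zero_mul]
    rw [Finset.sum_ite_mem, Finset.univ_inter]
  rw [htrE]
  have : ∑ j ∈ S, (M * D * Mᴴ) j j
      = ∑ i, ((d i : ℂ) * ((∑ j ∈ S, Complex.normSq (M j i) : ℝ) : ℂ)) := by
    rw [Finset.sum_congr rfl (fun j _ => hWjj j), Finset.sum_comm]
    apply Finset.sum_congr rfl
    intro i _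
    rw [← Finset.mul_sum]
    push_cast
    rfl
  rw [this]
  push_cast
  rfl

end MatAux


section MatAux2
variable {n : ℕ}

lemma unitary_mul_star' (u : Matrix.unitaryGroup (Fin n) ℂ) :
    (u : Matrix (Fin n) (Fin n) ℂ) * (u : Matrix (Fin n) (Fin n) ℂ)ᴴ = 1 := by
  rw [← Matrix.star_eq_conjTranspose]
  exact Unitary.coe_mul_star_self u

lemma unitary_star_mul' (u : Matrix.unitaryGroup (Fin n) ℂ) :
    (u : Matrix (Fin n) (Fin n) ℂ)ᴴ * (u : Matrix (Fin n) (Fin n) ℂ) = 1 := by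
  rw [← Matrix.star_eq_conjTranspose]
  exact Unitary.coe_star_mul_self u

/-- Row sums of squared moduli of a unitary matrix are 1. -/
lemma unitary_row_normSq (U V : Matrix.unitaryGroup (Fin n) ℂ) (j : Fin n) :
    ∑ i, Complex.normSq (((V : Matrix (Fin n) (Fin n) ℂ)ᴴ * (U : Matrix (Fin n) (Fin n) ℂ)) j i)
      = 1 := by
  set M : Matrix (Fin n) (Fin n) ℂ := (V : Matrix (Fin n) (Fin n) ℂ)ᴴ * (U : Matrix (Fin n) (Fin n) ℂ) with hM
  have hMMH : M * Mᴴ = 1 := by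
    rw [hM, Matrix.conjTranspose_mul, Matrix.conjTranspose_conjTranspose, Matrix.mul_assoc,
      ← Matrix.mul_assoc (U : Matrix (Fin n) (Fin n) ℂ), unitary_mul_star' U, Matrix.one_mul,
      unitary_star_mul' V]
  have h1 : (M * Mᴴ) j j = 1 := by rw [hMMH]; simp [Matrix.one_apply]
  rw [Matrix.mul_apply] at h1
  have h2 : ∑ i, M j i * Mᴴ i j = ((∑ i, Complex.normSq (M j i) : ℝ) : ℂ) := by
    push_cast
    apply Finset.sum_congr rfl
    intro i _
    rw [Matrix.conjTranspose_apply]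
    simp only [Complex.star_def]
    rw [Complex.mul_conj]
  rw [h2] at h1
  exact_mod_cast h1

/-- Column sums of squared moduli of a unitary matrix are 1. -/
lemma unitary_col_normSq (U V : Matrix.unitaryGroup (Fin n) ℂ) (i : Fin n) :
    ∑ j, Complex.normSq (((V : Matrix (Fin n) (Fin n) ℂ)ᴴ * (U : Matrix (Fin n) (Fin n) ℂ)) j i)
      = 1 := by
  set M : Matrix (Fin n) (Fin n) ℂ := (V : Matrix (Fin n) (Fin n) ℂ)ᴴ * (U : Matrix (Fin n) (Fin n) ℂ) with hM
  have hMHM : Mᴴ * M = 1 := by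
    rw [hM, Matrix.conjTranspose_mul, Matrix.conjTranspose_conjTranspose, Matrix.mul_assoc,
      ← Matrix.mul_assoc (V : Matrix (Fin n) (Fin n) ℂ), unitary_mul_star' V, Matrix.one_mul,
      unitary_star_mul' U]
  have h1 : (Mᴴ * M) i i = 1 := by rw [hMHM]; simp [Matrix.one_apply]
  rw [Matrix.mul_apply] at h1
  have h2 : ∑ j, Mᴴ i j * M j i = ((∑ j, Complex.normSq (M j i) : ℝ) : ℂ) := by
    push_cast
    apply Finset.sum_congr rfl
    intro j _
    rw [Matrix.conjTranspose_apply]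
    simp only [Complex.star_def]
    rw [mul_comm, Complex.mul_conj]
  rw [h2] at h1
  exact_mod_cast h1

/-- Characteristic polynomial is invariant under unitary conjugation. -/
lemma charpoly_unitary_conj (u : Matrix.unitaryGroup (Fin n) ℂ) (N : Matrix (Fin n) (Fin n) ℂ) :
    ((u : Matrix (Fin n) (Fin n) ℂ) * N * (u : Matrix (Fin n) (Fin n) ℂ)ᴴ).charpoly
      = N.charpoly := by
  classical
  have hc : ∀ (W : Matrix (Fin n) (Fin n) ℂ), Matrix.charmatrix W =
      Matrix.diagonal (fun _ => (Polynomial.X : Polynomial ℂ)) - W.map Polynomial.C := by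
    intro W
    ext i j
    by_cases h : i = j
    · subst h
      simp [Matrix.charmatrix_apply_eq, Matrix.sub_apply, Matrix.diagonal_apply_eq,
        Matrix.map_apply]
    · simp [Matrix.charmatrix_apply_ne _ _ _ h, Matrix.sub_apply, Matrix.diagonal_apply_ne _ h,
        Matrix.map_apply]
  set u' : Matrix (Fin n) (Fin n) (Polynomial ℂ) := (u : Matrix (Fin n) (Fin n) ℂ).map Polynomial.C with hu'
  set w' : Matrix (Fin n) (Fin n) (Polynomial ℂ) := ((u : Matrix (Fin n) (Fin n) ℂ)ᴴ).map Polynomial.C with hw'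
  have huw : u' * w' = 1 := by
    rw [hu', hw', ← Matrix.map_mul, unitary_mul_star' u, Matrix.map_one _ (map_zero _) (map_one _)]
  have hwu : w' * u' = 1 := by
    rw [hu', hw', ← Matrix.map_mul, unitary_star_mul' u, Matrix.map_one _ (map_zero _) (map_one _)]
  have hdiagX : Matrix.diagonal (fun _ : Fin n => (Polynomial.X : Polynomial ℂ))
      = (Polynomial.X : Polynomial ℂ) • (1 : Matrix (Fin n) (Fin n) (Polynomial ℂ)) := by
    rw [Matrix.smul_one_eq_diagonal]
  have key : Matrix.charmatrix ((u : Matrix (Fin n) (Fin n) ℂ) * N * (u : Matrix (Fin n) (Fin n) ℂ)ᴴ)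
      = u' * Matrix.charmatrix N * w' := by
    rw [hc, hc, Matrix.mul_sub, Matrix.sub_mul]
    congr 1
    · rw [hdiagX, mul_smul_comm, smul_mul_assoc, mul_one, huw]
    · simp only [Matrix.map_mul, Matrix.mul_assoc]; rfl
  rw [Matrix.charpoly, Matrix.charpoly, key, Matrix.det_mul, Matrix.det_mul]
  have : u'.det * (Matrix.charmatrix N).det * w'.det
      = (Matrix.charmatrix N).det * (u' * w').det := by
    rw [Matrix.det_mul]; ring
  rw [this, huw, Matrix.det_one, mul_one]

lemma charpoly_diagonal_complex (e : Fin n → ℂ) :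
    (Matrix.diagonal e).charpoly = ∏ i, (Polynomial.X - Polynomial.C (e i)) := by
  classical
  have : Matrix.charmatrix (Matrix.diagonal e)
      = Matrix.diagonal (fun i => Polynomial.X - Polynomial.C (e i)) := by
    ext i j
    by_cases h : i = j
    · subst h
      simp [Matrix.charmatrix_apply_eq]
    · simp [Matrix.charmatrix_apply_ne _ _ _ h, Matrix.diagonal_apply_ne _ h]
  rw [Matrix.charpoly, this, Matrix.det_diagonal]

/-- Eigenvalue multiset of a unitarily-diagonalized hermitian matrix. -/
lemma eig_multiset_eq {W : Matrix (Fin n) (Fin n) ℂ} (hW : W.IsHermitian)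
    (u : Matrix.unitaryGroup (Fin n) ℂ) (d : Fin n → ℝ)
    (hWu : W = (u : Matrix (Fin n) (Fin n) ℂ) * Matrix.diagonal (fun i => (d i : ℂ)) *
      (u : Matrix (Fin n) (Fin n) ℂ)ᴴ) :
    Multiset.map hW.eigenvalues Finset.univ.val = Multiset.map d Finset.univ.val := by
  classical
  have prod_eq_ms : ∀ f : Fin n → ℂ, (∏ i, (Polynomial.X - Polynomial.C (f i)))
      = (Multiset.map (fun a => Polynomial.X - Polynomial.C a)
          (Multiset.map f Finset.univ.val)).prod := by
    intro f
    rw [Multiset.map_map]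
    rfl
  have h1 : W.charpoly = ∏ i, (Polynomial.X - Polynomial.C ((hW.eigenvalues i : ℝ) : ℂ)) := by
    have hspec := hW.spectral_theorem
    rw [Unitary.conjStarAlgAut_apply, Matrix.star_eq_conjTranspose] at hspec
    have : W.charpoly = (Matrix.diagonal (RCLike.ofReal ∘ hW.eigenvalues :
        Fin n → ℂ)).charpoly := by
      conv_lhs => rw [hspec]
      exact charpoly_unitary_conj _ _
    rw [this, charpoly_diagonal_complex]
    rfl
  have h2 : W.charpoly = ∏ i, (Polynomial.X - Polynomial.C ((d i : ℝ) : ℂ)) := by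
    rw [hWu, charpoly_unitary_conj, charpoly_diagonal_complex]
  have h3 : Multiset.map (fun i => ((hW.eigenvalues i : ℝ) : ℂ)) Finset.univ.val
      = Multiset.map (fun i => ((d i : ℝ) : ℂ)) Finset.univ.val := by
    have r1 := congrArg Polynomial.roots (h1.symm.trans h2)
    rw [prod_eq_ms, prod_eq_ms, Polynomial.roots_multiset_prod_X_sub_C,
      Polynomial.roots_multiset_prod_X_sub_C] at r1
    exact r1
  have h4 : Multiset.map (Complex.ofReal) (Multiset.map hW.eigenvalues Finset.univ.val)
      = Multiset.map (Complex.ofReal) (Multiset.map d Finset.univ.val) := by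
    rw [Multiset.map_map, Multiset.map_map]
    exact h3
  exact Multiset.map_injective Complex.ofReal_injective h4

/-- Matrix exponential of a unitarily-conjugated real diagonal. -/
lemma exp_conj_diag (u : Matrix.unitaryGroup (Fin n) ℂ) (d : Fin n → ℝ) :
    NormedSpace.exp ((u : Matrix (Fin n) (Fin n) ℂ) * Matrix.diagonal (fun i => (d i : ℂ)) *
        (u : Matrix (Fin n) (Fin n) ℂ)ᴴ)
      = (u : Matrix (Fin n) (Fin n) ℂ) * Matrix.diagonal (fun i => ((Real.exp (d i) : ℝ) : ℂ)) *
        (u : Matrix (Fin n) (Fin n) ℂ)ᴴ := by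
  have h1 : ((Unitary.toUnits u : (Matrix (Fin n) (Fin n) ℂ)ˣ) : Matrix (Fin n) (Fin n) ℂ)
      = (u : Matrix (Fin n) (Fin n) ℂ) := rfl
  have h2 : (((Unitary.toUnits u)⁻¹ : (Matrix (Fin n) (Fin n) ℂ)ˣ) : Matrix (Fin n) (Fin n) ℂ)
      = (u : Matrix (Fin n) (Fin n) ℂ)ᴴ := by
    rw [← Matrix.star_eq_conjTranspose]
    rfl
  have hfun : NormedSpace.exp (fun i : Fin n => ((d i : ℝ) : ℂ))
      = fun i : Fin n => ((Real.exp (d i) : ℝ) : ℂ) := by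
    rw [Pi.exp_def]
    funext i
    rw [← Complex.exp_eq_exp_ℂ]
    exact (Complex.ofReal_exp (d i)).symm
  rw [← h2, ← h1, Matrix.exp_units_conj, Matrix.exp_diagonal, hfun]

end MatAux2


open scoped BigOperators Matrix ComplexOrder

/-- Ky Fan-type eigenvalue bound for the geometric mean
`A β₀ B = exp((log A + log B)/2)`: for every `1 ≤ k ≤ n`,
`(1/k) ∑_{j<k} λ_j(A β₀ B) ≥ (∏_{j<k} λ_j(A))^{1/2k} (∏_{j<k} λ_{n-j}(B))^{1/2k}`,
eigenvalues in descending order (for the positive definite matrix `A β₀ B` we use its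
singular values in descending order, which coincide with its eigenvalues). -/
theorem geometric_mean_ky_fan (n : ℕ) (A B : Matrix (Fin n) (Fin n) ℂ)
    (hA : A.PosDef) (hB : B.PosDef) (k : ℕ) (hk1 : 1 ≤ k) (hkn : k ≤ n) :
    (∏ j : Fin k, eigDesc hA.1 (Fin.castLE hkn j)) ^ (1 / (2 * (k : ℝ))) *
      (∏ j : Fin k, eigAsc hB.1 (Fin.castLE hkn j)) ^ (1 / (2 * (k : ℝ))) ≤
    (1 / (k : ℝ)) * ∑ j : Fin k,
      svDesc (NormedSpace.exp ((1/2 : ℂ) • (hermLog hA.1 + hermLog hB.1)))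
        (Fin.castLE hkn j) := by
  classical
  have hk0 : (0:ℝ) < k := by exact_mod_cast hk1
  set a : Fin n → ℝ := fun i => Real.log (hA.1.eigenvalues i) with hadef
  set b : Fin n → ℝ := fun i => Real.log (hB.1.eigenvalues i) with hbdef
  set UA := hA.1.eigenvectorUnitary with hUAdef
  set UB := hB.1.eigenvectorUnitary with hUBdef
  have hLAh : (hermLog hA.1).IsHermitian := isHermitian_conj_diag UA a
  have hLBh : (hermLog hB.1).IsHermitian := isHermitian_conj_diag UB b
  have hH : ((1/2 : ℂ) • (hermLog hA.1 + hermLog hB.1)).IsHermitian := by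
    have h12 : star (1/2 : ℂ) = (1/2 : ℂ) := by
      simp [Complex.star_def, Complex.ext_iff]
    unfold Matrix.IsHermitian
    rw [Matrix.conjTranspose_smul, Matrix.conjTranspose_add, hLAh, hLBh, h12]
  set μ : Fin n → ℝ := hH.eigenvalues with hmudef
  set VH := hH.eigenvectorUnitary with hVHdef
  have hspec : (1/2 : ℂ) • (hermLog hA.1 + hermLog hB.1)
      = (VH : Matrix (Fin n) (Fin n) ℂ) * Matrix.diagonal (fun i => ((μ i : ℝ) : ℂ)) *
        (VH : Matrix (Fin n) (Fin n) ℂ)ᴴ := by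
    have h := hH.spectral_theorem
    rw [Unitary.conjStarAlgAut_apply, Matrix.star_eq_conjTranspose] at h
    exact h
  set σA := Tuple.sort hA.1.eigenvalues with hsigAdef
  have hSinj : Function.Injective (fun j : Fin k => σA ((Fin.castLE hkn j).rev)) :=
    σA.injective.comp (Fin.rev_injective.comp (Fin.castLE_injective hkn))
  set S : Finset (Fin n) := Finset.image (fun j : Fin k => σA ((Fin.castLE hkn j).rev))
    Finset.univ with hSdef
  have hScard : S.card = k := by
    rw [hSdef, Finset.card_image_of_injective _ hSinj, Finset.card_univ, Fintype.card_fin]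
  -- weights
  set tA : Fin n → ℝ := fun i => ∑ j ∈ S, Complex.normSq
    (((UA : Matrix (Fin n) (Fin n) ℂ)ᴴ * (UA : Matrix (Fin n) (Fin n) ℂ)) j i) with htAdef
  set tB : Fin n → ℝ := fun i => ∑ j ∈ S, Complex.normSq
    (((UA : Matrix (Fin n) (Fin n) ℂ)ᴴ * (UB : Matrix (Fin n) (Fin n) ℂ)) j i) with htBdef
  set tH : Fin n → ℝ := fun i => ∑ j ∈ S, Complex.normSq
    (((UA : Matrix (Fin n) (Fin n) ℂ)ᴴ * (VH : Matrix (Fin n) (Fin n) ℂ)) j i) with htHdef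
  -- the three traces
  have htr1 := trace_proj UA UA a S
  have htr2 := trace_proj UB UA b S
  have htr3 := trace_proj VH UA μ S
  have hLAform : hermLog hA.1 = (UA : Matrix (Fin n) (Fin n) ℂ) *
      Matrix.diagonal (fun i => ((a i : ℝ) : ℂ)) * (UA : Matrix (Fin n) (Fin n) ℂ)ᴴ := rfl
  have hLBform : hermLog hB.1 = (UB : Matrix (Fin n) (Fin n) ℂ) *
      Matrix.diagonal (fun i => ((b i : ℝ) : ℂ)) * (UB : Matrix (Fin n) (Fin n) ℂ)ᴴ := rfl
  -- properties of tA : it's the indicator of S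
  have htA : ∀ i, tA i = if i ∈ S then 1 else 0 := by
    intro i
    rw [htAdef]
    simp only
    rw [unitary_star_mul' UA]
    simp only [Matrix.one_apply, apply_ite Complex.normSq, Complex.normSq_one,
      Complex.normSq_zero]
    rw [Finset.sum_ite_eq' S i (fun _ => (1:ℝ))]
  have hsum_aA : ∑ i, a i * tA i = ∑ j : Fin k, Real.log (eigDesc hA.1 (Fin.castLE hkn j)) := by
    have h1 : ∀ i, a i * tA i = if i ∈ S then a i else 0 := by
      intro i; rw [htA i]; split <;> simp
    rw [Finset.sum_congr rfl (fun i _ => h1 i), Finset.sum_ite_mem, Finset.univ_inter,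
      hSdef, Finset.sum_image (fun x _ y _ h => hSinj h)]
    exact Finset.sum_congr rfl (fun j _ => rfl)
  -- properties of tB
  have htB0 : ∀ i, 0 ≤ tB i := fun i => Finset.sum_nonneg (fun j _ => Complex.normSq_nonneg _)
  have htB1 : ∀ i, tB i ≤ 1 := by
    intro i
    have hsub : tB i ≤ ∑ j, Complex.normSq (((UA : Matrix (Fin n) (Fin n) ℂ)ᴴ * (UB : Matrix (Fin n) (Fin n) ℂ)) j i) :=
      Finset.sum_le_sum_of_subset_of_nonneg (Finset.subset_univ S) (fun j _ _ => Complex.normSq_nonneg _)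
    rw [unitary_col_normSq UB UA i] at hsub
    exact hsub
  have htBsum : ∑ i, tB i = k := by
    rw [htBdef]
    simp only
    rw [Finset.sum_comm]
    rw [Finset.sum_congr rfl (fun j _ => unitary_row_normSq UB UA j), Finset.sum_const,
      hScard, nsmul_eq_mul, mul_one]
  -- properties of tH
  have htH0 : ∀ i, 0 ≤ tH i := fun i => Finset.sum_nonneg (fun j _ => Complex.normSq_nonneg _)
  have htH1 : ∀ i, tH i ≤ 1 := by
    intro i
    have hsub : tH i ≤ ∑ j, Complex.normSq (((UA : Matrix (Fin n) (Fin n) ℂ)ᴴ * (VH : Matrix (Fin n) (Fin n) ℂ)) j i) :=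
      Finset.sum_le_sum_of_subset_of_nonneg (Finset.subset_univ S) (fun j _ _ => Complex.normSq_nonneg _)
    rw [unitary_col_normSq VH UA i] at hsub
    exact hsub
  have htHsum : ∑ i, tH i = k := by
    rw [htHdef]
    simp only
    rw [Finset.sum_comm]
    rw [Finset.sum_congr rfl (fun j _ => unitary_row_normSq VH UA j), Finset.sum_const,
      hScard, nsmul_eq_mul, mul_one]
  -- lower bound for the B part
  have hb_low : ∑ j : Fin k, Real.log (eigAsc hB.1 (Fin.castLE hkn j)) ≤ ∑ i, b i * tB i := by
    set σB := Tuple.sort hB.1.eigenvalues with hsigBdef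
    have hmono : Monotone (fun i => b (σB i)) := by
      intro i j hij
      exact Real.log_le_log (hB.eigenvalues_pos _) (Tuple.monotone_sort hB.1.eigenvalues hij)
    have hre : ∑ i, b i * tB i = ∑ i, b (σB i) * tB (σB i) :=
      (Equiv.sum_comp σB (fun i => b i * tB i)).symm
    rw [hre]
    have := botk_le_sum_mul hk1 hkn (fun i => b (σB i)) hmono (fun i => tB (σB i))
      (fun i => htB0 _) (fun i => htB1 _)
      (by rw [Equiv.sum_comp σB tB]; exact htBsum)
    exact this
  -- upper bound for the H part
  have hmu_up : ∑ i, μ i * tH i ≤ ∑ j : Fin k, eigDesc hH (Fin.castLE hkn j) := by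
    set σH := Tuple.sort μ with hsigHdef
    have hmono : Monotone (fun i => μ (σH i)) := Tuple.monotone_sort μ
    have hre : ∑ i, μ i * tH i = ∑ i, μ (σH i) * tH (σH i) :=
      (Equiv.sum_comp σH (fun i => μ i * tH i)).symm
    rw [hre]
    have := sum_mul_le_topk hk1 hkn (fun i => μ (σH i)) hmono (fun i => tH (σH i))
      (fun i => htH0 _) (fun i => htH1 _)
      (by rw [Equiv.sum_comp σH tH]; exact htHsum)
    exact this
  -- the trace identity
  have tr_main : Matrix.trace (((UA : Matrix (Fin n) (Fin n) ℂ) *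
        Matrix.diagonal (fun i => if i ∈ S then (1:ℂ) else 0) * (UA : Matrix (Fin n) (Fin n) ℂ)ᴴ) *
      ((1/2 : ℂ) • (hermLog hA.1 + hermLog hB.1)))
      = (1/2 : ℂ) * (((∑ i, a i * tA i : ℝ) : ℂ) + ((∑ i, b i * tB i : ℝ) : ℂ)) := by
    rw [Matrix.mul_smul, Matrix.trace_smul, Matrix.mul_add, Matrix.trace_add, smul_eq_mul]
    rw [show Matrix.trace (((UA : Matrix (Fin n) (Fin n) ℂ) *
        Matrix.diagonal (fun i => if i ∈ S then (1:ℂ) else 0) *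
        (UA : Matrix (Fin n) (Fin n) ℂ)ᴴ) * hermLog hA.1) = ((∑ i, a i * tA i : ℝ) : ℂ) from by
      rw [hLAform]; exact htr1]
    rw [show Matrix.trace (((UA : Matrix (Fin n) (Fin n) ℂ) *
        Matrix.diagonal (fun i => if i ∈ S then (1:ℂ) else 0) *
        (UA : Matrix (Fin n) (Fin n) ℂ)ᴴ) * hermLog hB.1) = ((∑ i, b i * tB i : ℝ) : ℂ) from by
      rw [hLBform]; exact htr2]
  have tr_left : Matrix.trace (((UA : Matrix (Fin n) (Fin n) ℂ) *
        Matrix.diagonal (fun i => if i ∈ S then (1:ℂ) else 0) * (UA : Matrix (Fin n) (Fin n) ℂ)ᴴ) *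
      ((1/2 : ℂ) • (hermLog hA.1 + hermLog hB.1))) = ((∑ i, μ i * tH i : ℝ) : ℂ) := by
    rw [hspec]; exact htr3
  have hmaineq : ∑ i, μ i * tH i = ((∑ i, a i * tA i) + (∑ i, b i * tB i))/2 := by
    have h := tr_left.symm.trans tr_main
    have h2 : ((∑ i, μ i * tH i : ℝ) : ℂ)
        = ((((∑ i, a i * tA i) + (∑ i, b i * tB i))/2 : ℝ) : ℂ) := by
      rw [h]; push_cast; ring
    exact_mod_cast h2
  -- key eigenvalue inequality
  set Sa := ∑ j : Fin k, Real.log (eigDesc hA.1 (Fin.castLE hkn j)) with hSadef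
  set Sb := ∑ j : Fin k, Real.log (eigAsc hB.1 (Fin.castLE hkn j)) with hSbdef
  set Smu := ∑ j : Fin k, eigDesc hH (Fin.castLE hkn j) with hSmudef
  have key_eig : (Sa + Sb)/2 ≤ Smu := by
    have h2 := hmu_up
    rw [hmaineq] at h2
    linarith [hb_low, hsum_aA, h2]
  -- the exponential side
  set X := NormedSpace.exp ((1/2 : ℂ) • (hermLog hA.1 + hermLog hB.1)) with hXdef
  have hXeq : X = (VH : Matrix (Fin n) (Fin n) ℂ) *
      Matrix.diagonal (fun i => ((Real.exp (μ i) : ℝ) : ℂ)) *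
      (VH : Matrix (Fin n) (Fin n) ℂ)ᴴ := by
    rw [hXdef, hspec]; exact exp_conj_diag VH μ
  have hXH : Xᴴ = X := by
    rw [hXeq]; exact isHermitian_conj_diag VH (fun i => Real.exp (μ i))
  have hWeq : Xᴴ * X = (VH : Matrix (Fin n) (Fin n) ℂ) *
      Matrix.diagonal (fun i => ((Real.exp (μ i) * Real.exp (μ i) : ℝ) : ℂ)) *
      (VH : Matrix (Fin n) (Fin n) ℂ)ᴴ := by
    rw [hXH, hXeq]
    have h5 := unitary_star_mul' VH
    calc ((VH : Matrix (Fin n) (Fin n) ℂ) * Matrix.diagonal (fun i => ((Real.exp (μ i) : ℝ) : ℂ)) *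
          (VH : Matrix (Fin n) (Fin n) ℂ)ᴴ) *
        ((VH : Matrix (Fin n) (Fin n) ℂ) * Matrix.diagonal (fun i => ((Real.exp (μ i) : ℝ) : ℂ)) *
          (VH : Matrix (Fin n) (Fin n) ℂ)ᴴ)
        = (VH : Matrix (Fin n) (Fin n) ℂ) * (Matrix.diagonal (fun i => ((Real.exp (μ i) : ℝ) : ℂ)) *
          (((VH : Matrix (Fin n) (Fin n) ℂ)ᴴ * (VH : Matrix (Fin n) (Fin n) ℂ)) *
          (Matrix.diagonal (fun i => ((Real.exp (μ i) : ℝ) : ℂ)) *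
            (VH : Matrix (Fin n) (Fin n) ℂ)ᴴ))) := by
          simp only [Matrix.mul_assoc]
      _ = (VH : Matrix (Fin n) (Fin n) ℂ) * (Matrix.diagonal (fun i => ((Real.exp (μ i) : ℝ) : ℂ)) *
          (Matrix.diagonal (fun i => ((Real.exp (μ i) : ℝ) : ℂ)) *
            (VH : Matrix (Fin n) (Fin n) ℂ)ᴴ)) := by rw [h5, Matrix.one_mul]
      _ = (VH : Matrix (Fin n) (Fin n) ℂ) *
          (Matrix.diagonal (fun i => ((Real.exp (μ i) : ℝ) : ℂ)) *
          Matrix.diagonal (fun i => ((Real.exp (μ i) : ℝ) : ℂ))) *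
            (VH : Matrix (Fin n) (Fin n) ℂ)ᴴ := by simp only [Matrix.mul_assoc]
      _ = _ := by
          rw [Matrix.diagonal_mul_diagonal]
          congr 2
          funext i
          push_cast
          rfl
  have hmulset : Multiset.map (Matrix.isHermitian_conjTranspose_mul_self X).eigenvalues
      Finset.univ.val = Multiset.map (fun i => Real.exp (μ i) * Real.exp (μ i))
        Finset.univ.val :=
    eig_multiset_eq _ VH _ hWeq
  have hsvms : Multiset.map (sv X) Finset.univ.val
      = Multiset.map (fun i => Real.exp (μ i)) Finset.univ.val := by
    calc Multiset.map (sv X) Finset.univ.val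
        = Multiset.map Real.sqrt (Multiset.map
            (Matrix.isHermitian_conjTranspose_mul_self X).eigenvalues Finset.univ.val) := by
          rw [Multiset.map_map]; rfl
      _ = Multiset.map Real.sqrt (Multiset.map (fun i => Real.exp (μ i) * Real.exp (μ i))
            Finset.univ.val) := by rw [hmulset]
      _ = Multiset.map (fun i => Real.sqrt (Real.exp (μ i) * Real.exp (μ i)))
            Finset.univ.val := by rw [Multiset.map_map]; rfl
      _ = _ := Multiset.map_congr rfl (fun i _ => Real.sqrt_mul_self (Real.exp_nonneg _))
  have hsort : (fun i => sv X (Tuple.sort (sv X) i)) = fun i => Real.exp (eigAsc hH i) := by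
    apply monotone_tuple_unique
    · exact Tuple.monotone_sort (sv X)
    · intro i j hij
      exact Real.exp_le_exp.mpr ((Tuple.monotone_sort μ) hij)
    · calc Multiset.map (fun i => sv X (Tuple.sort (sv X) i)) Finset.univ.val
          = Multiset.map (sv X ∘ Tuple.sort (sv X)) Finset.univ.val := rfl
        _ = Multiset.map (sv X) Finset.univ.val := multiset_map_comp_perm _ _
        _ = Multiset.map (fun i => Real.exp (μ i)) Finset.univ.val := hsvms
        _ = Multiset.map ((fun i => Real.exp (μ i)) ∘ (Tuple.sort μ)) Finset.univ.val :=
            (multiset_map_comp_perm _ _).symm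
        _ = Multiset.map (fun i => Real.exp (eigAsc hH i)) Finset.univ.val := rfl
  have hsum_sv : ∑ j : Fin k, svDesc X (Fin.castLE hkn j)
      = ∑ j : Fin k, Real.exp (eigDesc hH (Fin.castLE hkn j)) := by
    apply Finset.sum_congr rfl
    intro j _
    exact congrFun hsort ((Fin.castLE hkn j).rev)
  rw [hsum_sv]
  -- final computation
  have hPApos : (0:ℝ) < ∏ j : Fin k, eigDesc hA.1 (Fin.castLE hkn j) :=
    Finset.prod_pos (fun j _ => hA.eigenvalues_pos _)
  have hPBpos : (0:ℝ) < ∏ j : Fin k, eigAsc hB.1 (Fin.castLE hkn j) :=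
    Finset.prod_pos (fun j _ => hB.eigenvalues_pos _)
  have hlogPA : Real.log (∏ j : Fin k, eigDesc hA.1 (Fin.castLE hkn j)) = Sa := by
    rw [hSadef]
    exact Real.log_prod (fun j _ => ne_of_gt (hA.eigenvalues_pos _))
  have hlogPB : Real.log (∏ j : Fin k, eigAsc hB.1 (Fin.castLE hkn j)) = Sb := by
    rw [hSbdef]
    exact Real.log_prod (fun j _ => ne_of_gt (hB.eigenvalues_pos _))
  rw [Real.rpow_def_of_pos hPApos, Real.rpow_def_of_pos hPBpos, hlogPA, hlogPB,
    ← Real.exp_add]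
  -- Jensen
  have hJ : Real.exp (∑ j : Fin k, (1/(k:ℝ)) • (eigDesc hH (Fin.castLE hkn j)))
      ≤ ∑ j : Fin k, (1/(k:ℝ)) • Real.exp (eigDesc hH (Fin.castLE hkn j)) := by
    apply convexOn_exp.map_sum_le
    · intro i _; positivity
    · rw [Finset.sum_const, Finset.card_univ, Fintype.card_fin, nsmul_eq_mul]
      field_simp
    · intro i _; exact Set.mem_univ _
  simp only [smul_eq_mul] at hJ
  have hsum1 : ∑ j : Fin k, (1/(k:ℝ)) * (eigDesc hH (Fin.castLE hkn j)) = (1/(k:ℝ)) * Smu := by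
    rw [hSmudef, Finset.mul_sum]
  have hsum2 : ∑ j : Fin k, (1/(k:ℝ)) * Real.exp (eigDesc hH (Fin.castLE hkn j))
      = (1/(k:ℝ)) * ∑ j : Fin k, Real.exp (eigDesc hH (Fin.castLE hkn j)) := by
    rw [Finset.mul_sum]
  rw [hsum1, hsum2] at hJ
  have hstep1 : Real.exp (Sa * (1 / (2 * (k:ℝ))) + Sb * (1 / (2 * (k:ℝ))))
      ≤ Real.exp ((1/(k:ℝ)) * Smu) := by
    apply Real.exp_le_exp.mpr
    have h1 : Sa * (1 / (2 * (k:ℝ))) + Sb * (1 / (2 * (k:ℝ))) = ((Sa + Sb)/2) * (1/(k:ℝ)) := by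
      field_simp
    rw [h1]
    have h2 : (1/(k:ℝ)) * Smu = Smu * (1/(k:ℝ)) := by ring
    rw [h2]
    apply mul_le_mul_of_nonneg_right key_eig
    positivity
  exact le_trans hstep1 hJ
end

section
/- Let φ : ℝ → ℝ be strictly convex and let a, b ∈ ℝ^n with a majorized by b (a ≺ b). If ∑_{i=1}^n φ(a_i) = ∑_{i=1}^n φ(b_i), then a = Θb for some permutation matrix Θ, i.e. a is a rearrangement of b. -/
open scoped BigOperators Matrix ComplexOrder

/-- The entries of a real vector sorted in descending order. -/
noncomputable def sortDesc {n : ℕ} (a : Fin n → ℝ) : Fin n → ℝ :=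
  fun i => a (Tuple.sort a i.rev)

noncomputable def subgrad (φ : ℝ → ℝ) (x : ℝ) : ℝ :=
  sSup ((fun u => (φ u - φ x) / (u - x)) '' Set.Iio x)

lemma subgrad_bddAbove {φ : ℝ → ℝ} (hφ : ConvexOn ℝ Set.univ φ) (x : ℝ) :
    BddAbove ((fun u => (φ u - φ x) / (u - x)) '' Set.Iio x) := by
  refine ⟨(φ (x + 1) - φ x) / (x + 1 - x), ?_⟩
  rw [mem_upperBounds]
  rintro s ⟨u, hu, rfl⟩
  have hu' : u < x := hu
  exact hφ.secant_mono (Set.mem_univ x) (Set.mem_univ u) (Set.mem_univ (x+1))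
    (ne_of_lt hu') (by norm_num) (by linarith)

lemma subgrad_lt_slope {φ : ℝ → ℝ} (hφ : StrictConvexOn ℝ Set.univ φ) {x y : ℝ} (hxy : x < y) :
    subgrad φ x < (φ y - φ x) / (y - x) := by
  set m := x + (y - x) / 2 with hm
  have hxm : x < m := by rw [hm]; linarith
  have hmy : m < y := by rw [hm]; linarith
  have h1 : subgrad φ x ≤ (φ m - φ x) / (m - x) := by
    have hne : ((fun u => (φ u - φ x) / (u - x)) '' Set.Iio x).Nonempty :=
      ⟨(φ (x-1) - φ x)/((x-1) - x), ⟨x - 1, by simp, rfl⟩⟩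
    apply csSup_le hne
    rintro s ⟨u, hu, rfl⟩
    have hu' : u < x := hu
    exact hφ.convexOn.secant_mono (Set.mem_univ x) (Set.mem_univ u) (Set.mem_univ m)
      (ne_of_lt hu') (ne_of_gt hxm) (by linarith)
  have h2 : (φ m - φ x) / (m - x) < (φ y - φ x) / (y - x) :=
    hφ.secant_strict_mono (Set.mem_univ x) (Set.mem_univ m) (Set.mem_univ y)
      (ne_of_gt hxm) (ne_of_gt (hxm.trans hmy)) hmy
  linarith

lemma slope_lt_subgrad {φ : ℝ → ℝ} (hφ : StrictConvexOn ℝ Set.univ φ) {x y : ℝ} (hyx : y < x) :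
    (φ y - φ x) / (y - x) < subgrad φ x := by
  set m := y + (x - y) / 2 with hm
  have hym : y < m := by rw [hm]; linarith
  have hmx : m < x := by rw [hm]; linarith
  have h1 : (φ y - φ x) / (y - x) < (φ m - φ x) / (m - x) :=
    hφ.secant_strict_mono (Set.mem_univ x) (Set.mem_univ y) (Set.mem_univ m)
      (ne_of_lt (hym.trans hmx)) (ne_of_lt hmx) hym
  have h2 : (φ m - φ x) / (m - x) ≤ subgrad φ x :=
    le_csSup (subgrad_bddAbove hφ.convexOn x) ⟨m, hmx, rfl⟩
  linarith

lemma subgrad_strict_support {φ : ℝ → ℝ} (hφ : StrictConvexOn ℝ Set.univ φ) {x y : ℝ}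
    (h : y ≠ x) : φ x + subgrad φ x * (y - x) < φ y := by
  rcases lt_or_gt_of_ne h with hlt | hgt
  · have := slope_lt_subgrad hφ hlt
    have hd : y - x < 0 := by linarith
    rw [div_lt_iff_of_neg hd] at this
    linarith
  · have := subgrad_lt_slope hφ hgt
    have hd : 0 < y - x := by linarith
    rw [lt_div_iff₀ hd] at this
    linarith

lemma subgrad_support {φ : ℝ → ℝ} (hφ : StrictConvexOn ℝ Set.univ φ) (x y : ℝ) :
    φ x + subgrad φ x * (y - x) ≤ φ y := by
  rcases eq_or_ne y x with rfl | h
  · simp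
  · exact (subgrad_strict_support hφ h).le

lemma subgrad_mono {φ : ℝ → ℝ} (hφ : StrictConvexOn ℝ Set.univ φ) :
    Monotone (subgrad φ) := by
  intro x y hxy
  rcases eq_or_lt_of_le hxy with rfl | h
  · exact le_refl _
  · have h1 := subgrad_lt_slope hφ h
    have h2 := slope_lt_subgrad hφ (y := x) (x := y) h
    have : (φ y - φ x) / (y - x) = (φ x - φ y) / (x - y) := by
      rw [← neg_div_neg_eq]; ring_nf
    linarith [this ▸ h1, h2]

/-- if `a ≺ b` (majorization: descending partial sums of `a` are dominated by
those of `b`, with equal total sums) and `∑ φ(a_i) = ∑ φ(b_i)` for a strictly convex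
`φ : ℝ → ℝ`, then `a` is a permutation (rearrangement) of `b`. -/
theorem majorization_strict_convex_equality (n : ℕ) (φ : ℝ → ℝ)
    (hφ : StrictConvexOn ℝ Set.univ φ) (a b : Fin n → ℝ)
    (hmaj : ∀ (k : ℕ) (hk : k ≤ n),
      ∑ i : Fin k, sortDesc a (Fin.castLE hk i) ≤ ∑ i : Fin k, sortDesc b (Fin.castLE hk i))
    (hsum : ∑ i, a i = ∑ i, b i)
    (heq : ∑ i, φ (a i) = ∑ i, φ (b i)) :
    ∃ Θ : Equiv.Perm (Fin n), a = b ∘ Θ := by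
  classical
  set πa : Equiv.Perm (Fin n) := Fin.revPerm.trans (Tuple.sort a) with hπa
  set πb : Equiv.Perm (Fin n) := Fin.revPerm.trans (Tuple.sort b) with hπb
  have hAa : ∀ j, sortDesc a j = a (πa j) := fun j => rfl
  have hAb : ∀ j, sortDesc b j = b (πb j) := fun j => rfl
  -- sortDesc is antitone
  have hanti : ∀ (i j : Fin n), i ≤ j → sortDesc a j ≤ sortDesc a i := by
    intro i j h
    exact Tuple.monotone_sort a (Fin.rev_le_rev.mpr h)
  -- ℕ-extensions
  set α' : ℕ → ℝ := fun i => if h : i < n then sortDesc a ⟨i, h⟩ else 0 with hα'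
  set β' : ℕ → ℝ := fun i => if h : i < n then sortDesc b ⟨i, h⟩ else 0 with hβ'
  set c' : ℕ → ℝ := fun i => subgrad φ (α' i) with hc'
  have hsa : ∀ (k : ℕ) (hk : k ≤ n),
      ∑ i ∈ Finset.range k, α' i = ∑ i : Fin k, sortDesc a (Fin.castLE hk i) := by
    intro k hk
    rw [← Fin.sum_univ_eq_sum_range]
    refine Finset.sum_congr rfl fun i _ => ?_
    simp only [hα']
    rw [dif_pos (lt_of_lt_of_le i.2 hk)]
    rfl
  have hsb : ∀ (k : ℕ) (hk : k ≤ n),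
      ∑ i ∈ Finset.range k, β' i = ∑ i : Fin k, sortDesc b (Fin.castLE hk i) := by
    intro k hk
    rw [← Fin.sum_univ_eq_sum_range]
    refine Finset.sum_congr rfl fun i _ => ?_
    simp only [hβ']
    rw [dif_pos (lt_of_lt_of_le i.2 hk)]
    rfl
  have hD : ∀ k, k ≤ n → 0 ≤ ∑ i ∈ Finset.range k, (β' i - α' i) := by
    intro k hk
    rw [Finset.sum_sub_distrib, sub_nonneg, hsa k hk, hsb k hk]
    exact hmaj k hk
  -- total sums
  have hta : ∑ i ∈ Finset.range n, α' i = ∑ i, a i := by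
    rw [hsa n le_rfl]
    rw [show (∑ i : Fin n, sortDesc a (Fin.castLE le_rfl i)) = ∑ i, a (πa i) from
      Finset.sum_congr rfl fun i _ => by rw [hAa]; rfl]
    exact Equiv.sum_comp πa a
  have htb : ∑ i ∈ Finset.range n, β' i = ∑ i, b i := by
    rw [hsb n le_rfl]
    rw [show (∑ i : Fin n, sortDesc b (Fin.castLE le_rfl i)) = ∑ i, b (πb i) from
      Finset.sum_congr rfl fun i _ => by rw [hAb]; rfl]
    exact Equiv.sum_comp πb b
  have hDn : ∑ i ∈ Finset.range n, (β' i - α' i) = 0 := by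
    rw [Finset.sum_sub_distrib, hta, htb, hsum, sub_self]
  -- Abel summation: the subgradient pairing is nonnegative
  have habel : 0 ≤ ∑ i ∈ Finset.range n, c' i * (β' i - α' i) := by
    have hb := Finset.sum_range_by_parts c' (fun i => β' i - α' i) n
    simp only [smul_eq_mul] at hb
    rw [hb, hDn, mul_zero, zero_sub, neg_nonneg]
    apply Finset.sum_nonpos
    intro i hi
    have hi' : i < n - 1 := Finset.mem_range.mp hi
    have h1 : i < n := by omega
    have h2 : i + 1 < n := by omega
    have hmono : c' (i + 1) ≤ c' i := by
      apply subgrad_mono hφ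
      simp only [hα']
      rw [dif_pos h1, dif_pos h2]
      exact hanti ⟨i, h1⟩ ⟨i + 1, h2⟩ (by simp [Fin.le_def])
    have hDpos : 0 ≤ ∑ j ∈ Finset.range (i + 1), (β' j - α' j) := hD (i + 1) (by omega)
    exact mul_nonpos_of_nonpos_of_nonneg (by linarith) hDpos
  -- per-term analysis
  set T : Fin n → ℝ := fun i =>
    φ (sortDesc b i) - φ (sortDesc a i)
      - subgrad φ (sortDesc a i) * (sortDesc b i - sortDesc a i) with hT
  have hT0 : ∀ i ∈ Finset.univ, (0:ℝ) ≤ T i := by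
    intro i _
    have := subgrad_support hφ (sortDesc a i) (sortDesc b i)
    simp only [hT]
    linarith
  have hφa : ∑ i, φ (sortDesc a i) = ∑ i, φ (a i) := by
    rw [show (∑ i, φ (sortDesc a i)) = ∑ i, (φ ∘ a) (πa i) from
      Finset.sum_congr rfl fun i _ => by rw [hAa]; rfl]
    exact Equiv.sum_comp πa (φ ∘ a)
  have hφb : ∑ i, φ (sortDesc b i) = ∑ i, φ (b i) := by
    rw [show (∑ i, φ (sortDesc b i)) = ∑ i, (φ ∘ b) (πb i) from
      Finset.sum_congr rfl fun i _ => by rw [hAb]; rfl]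
    exact Equiv.sum_comp πb (φ ∘ b)
  have hpair : ∑ i : Fin n, subgrad φ (sortDesc a i) * (sortDesc b i - sortDesc a i)
      = ∑ i ∈ Finset.range n, c' i * (β' i - α' i) := by
    rw [← Fin.sum_univ_eq_sum_range]
    refine Finset.sum_congr rfl fun i _ => ?_
    simp only [hc', hα', hβ', dif_pos i.2, Fin.eta]
  have hTsum : ∑ i, T i ≤ 0 := by
    have : ∑ i, T i = (∑ i, φ (sortDesc b i)) - (∑ i, φ (sortDesc a i))
        - ∑ i : Fin n, subgrad φ (sortDesc a i) * (sortDesc b i - sortDesc a i) := by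
      rw [hT]
      simp [Finset.sum_sub_distrib]
    rw [this, hφa, hφb, heq, sub_self, zero_sub, hpair]
    linarith
  have hTzero : ∀ i ∈ Finset.univ, T i = 0 :=
    (Finset.sum_eq_zero_iff_of_nonneg hT0).mp
      (le_antisymm hTsum (Finset.sum_nonneg hT0))
  have key : ∀ i, sortDesc a i = sortDesc b i := by
    intro i
    by_contra hne
    have hne' : sortDesc b i ≠ sortDesc a i := fun h => hne h.symm
    have := subgrad_strict_support hφ hne'
    have hz := hTzero i (Finset.mem_univ i)
    simp only [hT] at hz
    linarith
  refine ⟨πa.symm.trans πb, ?_⟩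
  funext x
  have h1 : sortDesc a (πa.symm x) = sortDesc b (πa.symm x) := key _
  rw [hAa, hAb, Equiv.apply_symm_apply] at h1
  exact h1
end

section
/- Let C ∈ M_n(ℂ) be positive definite, let D ∈ M_n(ℂ) be a hermitian diagonal matrix, let t ≥ 0, and let k ≥ 1 be an integer. Then Tr[((C + tI)^{−1} D)^{2k}] ≥ Tr[((C_Diag + tI)^{−1} D)^{2k}], where C_Diag denotes the diagonal matrix whose diagonal entries are those of C. -/
open scoped BigOperators Matrix ComplexOrder

namespace Tidc

attribute [local instance] Matrix.linftyOpNormedAddCommGroup Matrix.linftyOpNormedSpace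
  Matrix.linftyOpNonUnitalSemiNormedRing Matrix.linftyOpSemiNormedRing
  Matrix.linftyOpNonUnitalNormedRing Matrix.linftyOpNormedRing Matrix.linftyOpNormedAlgebra

variable {n : ℕ}


lemma trace_mul_diag_mul_diag (F G : Matrix (Fin n) (Fin n) ℂ) (u v : Fin n → ℂ) :
    (F * Matrix.diagonal u * G * Matrix.diagonal v).trace
      = ∑ p, ∑ q, F p q * G q p * u q * v p := by
  unfold Matrix.trace
  refine Finset.sum_congr rfl fun p _ => ?_
  rw [Matrix.diag_apply, Matrix.mul_diagonal, Matrix.mul_apply, Finset.sum_mul]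
  refine Finset.sum_congr rfl fun q _ => ?_
  rw [Matrix.mul_diagonal]
  ring

lemma geom2_nonneg (x y : ℝ) (m : ℕ) (hm : Even m) :
    0 ≤ ∑ j ∈ Finset.range (m + 1), x ^ j * y ^ (m - j) := by
  rcases eq_or_ne x y with rfl | hxy
  · refine Finset.sum_nonneg fun j hj => ?_
    rw [Finset.mem_range] at hj
    rw [← pow_add]
    have : j + (m - j) = m := by omega
    rw [this]
    exact hm.pow_nonneg x
  · have hkey : (∑ j ∈ Finset.range (m + 1), x ^ j * y ^ (m - j)) * (x - y)
        = x ^ (m + 1) - y ^ (m + 1) := by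
      have := geom_sum₂_mul x y (m + 1)
      simpa using this
    have hodd : Odd (m + 1) := Even.add_one hm
    rcases lt_trichotomy x y with h | h | h
    · have h1 : x ^ (m+1) - y ^ (m+1) < 0 := sub_neg.2 (hodd.strictMono_pow h)
      nlinarith [hkey]
    · exact absurd h hxy
    · have h1 : (0:ℝ) < x ^ (m+1) - y ^ (m+1) := sub_pos.2 (hodd.strictMono_pow h)
      nlinarith [hkey]

lemma key_pos (F : Matrix (Fin n) (Fin n) ℂ) (hF : F.IsHermitian) (w : Fin n → ℝ)
    (m : ℕ) (hm : Even m) :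
    0 ≤ ((F * F * (Matrix.diagonal fun i => (w i : ℂ)) ^ m).trace
        + ∑ j ∈ Finset.range m,
            (F * (Matrix.diagonal fun i => (w i : ℂ)) ^ j * F *
              (Matrix.diagonal fun i => (w i : ℂ)) ^ (m - j)).trace).re := by
  set Λ : Matrix (Fin n) (Fin n) ℂ := Matrix.diagonal fun i => (w i : ℂ) with hΛ
  have hT : ∀ j, (F * Λ ^ j * F * Λ ^ (m - j)).trace
      = ((∑ p, ∑ q, Complex.normSq (F p q) * (w q ^ j * w p ^ (m - j)) : ℝ) : ℂ) := by
    intro j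
    rw [hΛ, Matrix.diagonal_pow, Matrix.diagonal_pow, trace_mul_diag_mul_diag]
    push_cast
    refine Finset.sum_congr rfl fun p _ => Finset.sum_congr rfl fun q _ => ?_
    have h1 : F q p = (starRingEnd ℂ) (F p q) := by
      have h2 := hF.apply q p
      rw [starRingEnd_apply]
      exact h2.symm
    simp only [Pi.pow_apply]
    rw [h1, ← Complex.mul_conj]
    ring
  have hT0 : F * F * Λ ^ m = F * Λ ^ 0 * F * Λ ^ (m - 0) := by
    simp
  have hTm : (F * Λ ^ m * F * Λ ^ (m - m)).trace = (F * Λ ^ 0 * F * Λ ^ (m - 0)).trace := by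
    simp only [Nat.sub_self, pow_zero, mul_one, Nat.sub_zero]
    rw [Matrix.trace_mul_cycle]
  have hsum_eq : (F * F * Λ ^ m).trace
        + ∑ j ∈ Finset.range m, (F * Λ ^ j * F * Λ ^ (m - j)).trace
      = ∑ j ∈ Finset.range (m + 1), (F * Λ ^ j * F * Λ ^ (m - j)).trace := by
    rw [Finset.sum_range_succ, hTm, hT0, add_comm]
  rw [hsum_eq]
  have : ∀ j ∈ Finset.range (m+1), (F * Λ ^ j * F * Λ ^ (m - j)).trace
      = ((∑ p, ∑ q, Complex.normSq (F p q) * (w q ^ j * w p ^ (m - j)) : ℝ) : ℂ) :=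
    fun j _ => hT j
  rw [Finset.sum_congr rfl this, ← Complex.ofReal_sum, Complex.ofReal_re]
  rw [Finset.sum_comm]
  refine Finset.sum_nonneg fun p _ => ?_
  rw [Finset.sum_comm]
  refine Finset.sum_nonneg fun q _ => ?_
  have : ∑ j ∈ Finset.range (m+1), Complex.normSq (F p q) * (w q ^ j * w p ^ (m - j))
      = Complex.normSq (F p q) * ∑ j ∈ Finset.range (m+1), w q ^ j * w p ^ (m - j) := by
    rw [Finset.mul_sum]
  rw [this]
  exact mul_nonneg (Complex.normSq_nonneg _) (geom2_nonneg _ _ m hm)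


lemma conj_mul {B S Y Z : Matrix (Fin n) (Fin n) ℂ} (h : S * B = 1) :
    (B * Y * S) * (B * Z * S) = B * (Y * Z) * S := by
  simp only [Matrix.mul_assoc]
  rw [← Matrix.mul_assoc S B, h, one_mul]

lemma conj_pow {B S X : Matrix (Fin n) (Fin n) ℂ} (h1 : B * S = 1) (h2 : S * B = 1) (j : ℕ) :
    (B * X * S) ^ j = B * X ^ j * S := by
  induction j with
  | zero => simp [h1]
  | succ j ih => rw [pow_succ, ih, conj_mul h2, ← pow_succ]

lemma trace_conj {B S : Matrix (Fin n) (Fin n) ℂ} (h : S * B = 1) (Z : Matrix (Fin n) (Fin n) ℂ) :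
    (B * Z * S).trace = Z.trace := by
  rw [Matrix.trace_mul_cycle, h, one_mul]

lemma key_ineq {A R D : Matrix (Fin n) (Fin n) ℂ} (hA : A.PosDef) (hR : R.IsHermitian)
    (hD : D.IsHermitian) (m : ℕ) (hm : Even m) :
    0 ≤ ((A⁻¹ * R * (A⁻¹ * R) * (A⁻¹ * D) ^ m).trace
        + ∑ j ∈ Finset.range m,
            (A⁻¹ * R * (A⁻¹ * D) ^ j * (A⁻¹ * R) * (A⁻¹ * D) ^ (m - j)).trace).re := by
  classical
  open scoped MatrixOrder in
  obtain ⟨S, hSS, hSH⟩ : ∃ S : Matrix (Fin n) (Fin n) ℂ, S * S = A ∧ S.IsHermitian :=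
    ⟨CFC.sqrt A, CFC.sqrt_mul_sqrt_self A hA.posSemidef.nonneg, (Matrix.nonneg_iff_posSemidef.mp (CFC.sqrt_nonneg A)).1⟩
  have hdet : S.det * S.det = A.det := by rw [← Matrix.det_mul, hSS]
  have hAdet : A.det ≠ 0 := hA.det_pos.ne'
  have hSdetne : S.det ≠ 0 := by
    intro h; rw [h, mul_zero] at hdet; exact hAdet hdet.symm
  have hSunit : IsUnit S.det := hSdetne.isUnit
  set B := S⁻¹ with hBdef
  have hBS : B * S = 1 := Matrix.nonsing_inv_mul S hSunit
  have hSB : S * B = 1 := Matrix.mul_nonsing_inv S hSunit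
  have hBH : B.IsHermitian := hSH.inv
  have hAinv : A⁻¹ = B * B := by rw [← hSS, Matrix.mul_inv_rev]
  set X := B * R * B with hXdef
  set W := B * D * B with hWdef
  have hXH : X.IsHermitian := by
    have h := Matrix.isHermitian_conjTranspose_mul_mul B hR
    rwa [hBH] at h
  have hWH : W.IsHermitian := by
    have h := Matrix.isHermitian_conjTranspose_mul_mul B hD
    rwa [hBH] at h
  have hPc : A⁻¹ * R = B * X * S := by
    rw [hAinv, hXdef]
    simp only [Matrix.mul_assoc]
    rw [hBS, mul_one]
  have hMc : A⁻¹ * D = B * W * S := by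
    rw [hAinv, hWdef]
    simp only [Matrix.mul_assoc]
    rw [hBS, mul_one]
  have e1 : A⁻¹ * R * (A⁻¹ * R) * (A⁻¹ * D) ^ m = B * (X * X * W ^ m) * S := by
    rw [hPc, hMc, conj_pow hBS hSB, conj_mul hSB, conj_mul hSB]
  have e2 : ∀ j, A⁻¹ * R * (A⁻¹ * D) ^ j * (A⁻¹ * R) * (A⁻¹ * D) ^ (m - j)
      = B * (X * W ^ j * X * W ^ (m - j)) * S := by
    intro j
    rw [hPc, hMc, conj_pow hBS hSB, conj_pow hBS hSB, conj_mul hSB, conj_mul hSB, conj_mul hSB]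
  rw [e1]
  rw [Finset.sum_congr rfl fun j _ => congrArg Matrix.trace (e2 j)]
  rw [trace_conj hSB]
  rw [Finset.sum_congr rfl fun j _ => trace_conj hSB _]
  -- spectral decomposition of W
  set V : Matrix (Fin n) (Fin n) ℂ := (Matrix.IsHermitian.eigenvectorUnitary hWH : Matrix (Fin n) (Fin n) ℂ) with hVdef
  have hVmem := (Matrix.IsHermitian.eigenvectorUnitary hWH).prop
  have hV1 : V * star V = 1 := Matrix.mem_unitaryGroup_iff.mp hVmem
  have hV2 : star V * V = 1 := Matrix.mem_unitaryGroup_iff'.mp hVmem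
  set w : Fin n → ℝ := hWH.eigenvalues with hwdef
  set Λ : Matrix (Fin n) (Fin n) ℂ := Matrix.diagonal fun i => (w i : ℂ) with hΛdef
  have hspec : W = V * Λ * star V := by
    have := hWH.spectral_theorem
    rw [this]
    rfl
  set F : Matrix (Fin n) (Fin n) ℂ := star V * X * V with hFdef
  have hFH : F.IsHermitian := by
    have h := Matrix.isHermitian_conjTranspose_mul_mul V hXH
    rwa [← Matrix.star_eq_conjTranspose] at h
  have hXc : V * F * star V = X := by
    rw [hFdef]
    simp only [Matrix.mul_assoc]
    rw [← Matrix.mul_assoc V (star V), hV1, one_mul, mul_one]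
  have f1 : X * X * W ^ m = V * (F * F * Λ ^ m) * star V := by
    rw [hspec, ← hXc, conj_pow hV1 hV2, conj_mul hV2, conj_mul hV2]
  have f2 : ∀ j, X * W ^ j * X * W ^ (m - j) = V * (F * Λ ^ j * F * Λ ^ (m - j)) * star V := by
    intro j
    rw [hspec, ← hXc, conj_pow hV1 hV2, conj_pow hV1 hV2, conj_mul hV2, conj_mul hV2, conj_mul hV2]
  rw [f1, Finset.sum_congr rfl fun j _ => congrArg Matrix.trace (f2 j)]
  rw [trace_conj hV2, Finset.sum_congr rfl fun j _ => trace_conj hV2 _]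
  exact key_pos F hFH w m hm


noncomputable def traceCLM : Matrix (Fin n) (Fin n) ℂ →L[ℝ] ℂ :=
  LinearMap.toContinuousLinearMap ((Matrix.traceLinearMap (Fin n) ℂ ℂ).restrictScalars ℝ)

@[simp] lemma traceCLM_apply (X : Matrix (Fin n) (Fin n) ℂ) : traceCLM X = X.trace := rfl

lemma hasDerivAt_matrix_pow {M : ℝ → Matrix (Fin n) (Fin n) ℂ} {M' : Matrix (Fin n) (Fin n) ℂ}
    {s : ℝ} (h : HasDerivAt M M' s) (j : ℕ) :
    HasDerivAt (fun x => M x ^ j)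
      (∑ i ∈ Finset.range j, M s ^ i * M' * M s ^ (j - 1 - i)) s := by
  induction j with
  | zero =>
    simp only [pow_zero, Finset.range_zero, Finset.sum_empty]
    exact hasDerivAt_const s _
  | succ j ih =>
      have h2 : HasDerivAt (fun x => M x ^ j * M x) _ s := ih.mul h
      have heq : (fun x => M x ^ j * M x) = fun x => M x ^ (j + 1) :=
        funext fun x => (pow_succ _ _).symm
      rw [heq] at h2
      convert h2 using 1
      rw [Finset.sum_range_succ, Finset.sum_mul]
      congr 1
      · refine Finset.sum_congr rfl fun i hi => ?_
        rw [Finset.mem_range] at hi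
        have hexp : j + 1 - 1 - i = j - 1 - i + 1 := by omega
        rw [hexp, pow_succ]
        simp only [mul_assoc]
      · have : j + 1 - 1 - j = 0 := by omega
        rw [this, pow_zero, mul_one]

lemma hasDerivAt_ringInverse_comp {A : ℝ → Matrix (Fin n) (Fin n) ℂ}
    {A' : Matrix (Fin n) (Fin n) ℂ} {s : ℝ} (hA : HasDerivAt A A' s) (hu : IsUnit (A s)) :
    HasDerivAt (fun x => Ring.inverse (A x))
      (-(Ring.inverse (A s) * A' * Ring.inverse (A s))) s := by
  rcases hu with ⟨u, hspec⟩
  have h1 : HasFDerivAt Ring.inverse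
      (-(ContinuousLinearMap.mulLeftRight ℝ (Matrix (Fin n) (Fin n) ℂ)
        (↑u⁻¹) (↑u⁻¹))) (A s) := by
    rw [← hspec]
    exact hasFDerivAt_ringInverse u
  have h2 := h1.comp_hasDerivAt s hA
  have h3 : Ring.inverse (A s) = (↑u⁻¹ : Matrix (Fin n) (Fin n) ℂ) := by
    rw [← hspec, Ring.inverse_unit]
  simp only [ContinuousLinearMap.neg_apply, ContinuousLinearMap.mulLeftRight_apply] at h2
  rw [h3]
  exact h2


lemma posDef_ofReal_smul {c : ℝ} (hc : 0 < c) {A : Matrix (Fin n) (Fin n) ℂ} (hA : A.PosDef) :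
    ((c : ℂ) • A).PosDef := by
  refine Matrix.PosDef.of_dotProduct_mulVec_pos ?_ ?_
  · show ((c : ℂ) • A)ᴴ = (c : ℂ) • A
    rw [Matrix.conjTranspose_smul, hA.1.eq]
    congr 1
    simp [Complex.star_def, Complex.conj_ofReal]
  · intro x hx
    have h0 := hA.dotProduct_mulVec_pos hx
    rw [Matrix.smul_mulVec, dotProduct_smul, smul_eq_mul]
    exact mul_pos (by exact_mod_cast hc) h0

lemma real_smul_matrix (s : ℝ) (X : Matrix (Fin n) (Fin n) ℂ) : s • X = (s : ℂ) • X := by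
  ext i j
  simp [Complex.real_smul]

theorem main_aux (Δ R D : Matrix (Fin n) (Fin n) ℂ)
    (hΔ : Δ.PosDef) (hΔdiag : Δ.IsDiag) (hsum : (Δ + R).PosDef)
    (hR : R.IsHermitian) (hR0 : ∀ i, R i i = 0)
    (hD : D.IsHermitian) (hDdiag : D.IsDiag) (m : ℕ) (hm : Even m) (hm0 : m ≠ 0) :
    ((Δ⁻¹ * D) ^ m).trace.re ≤ (((Δ + R)⁻¹ * D) ^ m).trace.re := by
  classical
  set A : ℝ → Matrix (Fin n) (Fin n) ℂ := fun s => Δ + s • R with hAdef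
  set N : ℝ → Matrix (Fin n) (Fin n) ℂ := fun s => Ring.inverse (A s) with hNdef
  set P : ℝ → Matrix (Fin n) (Fin n) ℂ := fun s => N s * R with hPdef
  set M : ℝ → Matrix (Fin n) (Fin n) ℂ := fun s => N s * D with hMdef
  set g : ℝ → ℝ := fun s => ((M s) ^ m).trace.re with hgdef
  set g₁ : ℝ → ℝ := fun s => (-(m : ℂ) * (P s * (M s) ^ m).trace).re with hg₁def
  set Qc : ℝ → ℂ := fun s => (P s * P s * (M s) ^ m).trace
      + ∑ j ∈ Finset.range m, (P s * (M s) ^ j * P s * (M s) ^ (m - j)).trace with hQcdef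
  -- positive definiteness along the segment
  have hA_pd : ∀ s ∈ Set.Icc (0 : ℝ) 1, (A s).PosDef := by
    intro s hs
    rcases eq_or_lt_of_le hs.1 with h0 | h0
    · have : A s = Δ := by rw [hAdef]; simp [← h0]
      rw [this]; exact hΔ
    rcases eq_or_lt_of_le hs.2 with h1 | h1
    · have : A s = Δ + R := by rw [hAdef]; simp [h1]
      rw [this]; exact hsum
    have hcomb : A s = ((1 - s : ℝ) : ℂ) • Δ + (s : ℂ) • (Δ + R) := by
      rw [hAdef]
      simp only [smul_add]
      rw [real_smul_matrix s R]
      have : ((1 - s : ℝ) : ℂ) • Δ + (s : ℂ) • Δ = Δ := by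
        rw [← add_smul]
        push_cast
        simp
      rw [← add_assoc, this]
    rw [hcomb]
    exact (posDef_ofReal_smul (by linarith) hΔ).add_posSemidef
      (posDef_ofReal_smul h0 hsum).posSemidef
  have hunit : ∀ s ∈ Set.Icc (0 : ℝ) 1, IsUnit (A s) := fun s hs => (hA_pd s hs).isUnit
  -- derivative of A
  have hAder : ∀ s : ℝ, HasDerivAt A R s := by
    intro s
    have h := ((hasDerivAt_id s).smul_const R).const_add Δ
    simp only [one_smul] at h
    exact h
  -- derivatives of building blocks
  have hNder : ∀ s : ℝ, IsUnit (A s) → HasDerivAt N (-(N s * R * N s)) s :=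
    fun s hs => hasDerivAt_ringInverse_comp (hAder s) hs
  have hMder : ∀ s : ℝ, IsUnit (A s) → HasDerivAt M (-(P s * M s)) s := by
    intro s hs
    have h := (hNder s hs).mul_const D
    have : -(N s * R * N s) * D = -(P s * M s) := by
      rw [hPdef, hMdef]
      simp only [neg_mul, Matrix.mul_assoc]
    rwa [this] at h
  have hPder : ∀ s : ℝ, IsUnit (A s) → HasDerivAt P (-(P s * P s)) s := by
    intro s hs
    have h := (hNder s hs).mul_const R
    have : -(N s * R * N s) * R = -(P s * P s) := by
      rw [hPdef]
      simp only [neg_mul, Matrix.mul_assoc]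
    rwa [this] at h
  -- derivative of g
  have hGder : ∀ s : ℝ, IsUnit (A s) → HasDerivAt g (g₁ s) s := by
    intro s hs
    have hpow := hasDerivAt_matrix_pow (hMder s hs) m
    have htr := (traceCLM.hasFDerivAt).comp_hasDerivAt s hpow
    have hre := (Complex.reCLM.hasFDerivAt).comp_hasDerivAt s htr
    have hval : (traceCLM (∑ i ∈ Finset.range m, M s ^ i * (-(P s * M s)) * M s ^ (m - 1 - i)))
        = -(m : ℂ) * (P s * (M s) ^ m).trace := by
      rw [traceCLM_apply, Matrix.trace_sum]
      have heach : ∀ i ∈ Finset.range m,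
          (M s ^ i * (-(P s * M s)) * M s ^ (m - 1 - i)).trace
            = -((P s * (M s) ^ m).trace) := by
        intro i hi
        rw [Finset.mem_range] at hi
        have h1 : M s ^ i * (-(P s * M s)) * M s ^ (m - 1 - i)
            = -(M s ^ i * (P s * M s ^ (m - i))) := by
          have hexp : m - 1 - i + 1 = m - i := by omega
          simp only [mul_neg, neg_mul]
          congr 1
          simp only [Matrix.mul_assoc]
          congr 2
          rw [← pow_succ', hexp]
        rw [h1, Matrix.trace_neg]
        congr 1
        rw [Matrix.trace_mul_comm]
        have : P s * M s ^ (m - i) * M s ^ i = P s * (M s) ^ m := by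
          rw [Matrix.mul_assoc, ← pow_add]
          congr 2
          omega
        rw [this]
      rw [Finset.sum_congr rfl heach, Finset.sum_const, Finset.card_range]
      simp [nsmul_eq_mul]
    replace hre := hre.congr_deriv (congrArg Complex.re hval)
    exact hre
  -- derivative of g₁
  have hG₁der : ∀ s : ℝ, IsUnit (A s) → HasDerivAt g₁ (((m : ℂ) * Qc s).re) s := by
    intro s hs
    have hpow := hasDerivAt_matrix_pow (hMder s hs) m
    have hprod := (hPder s hs).mul hpow
    have htr := (traceCLM.hasFDerivAt).comp_hasDerivAt s hprod
    have htr2 := htr.const_mul (-(m : ℂ))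
    have hre := (Complex.reCLM.hasFDerivAt).comp_hasDerivAt s htr2
    have hval : (-(m : ℂ)) * traceCLM
        (-(P s * P s) * M s ^ m
          + P s * ∑ i ∈ Finset.range m, M s ^ i * (-(P s * M s)) * M s ^ (m - 1 - i))
        = (m : ℂ) * Qc s := by
      rw [traceCLM_apply, Matrix.trace_add]
      have hfirst : (-(P s * P s) * M s ^ m).trace = -((P s * P s * M s ^ m).trace) := by
        rw [neg_mul, Matrix.trace_neg]
      have hsecond : (P s * ∑ i ∈ Finset.range m,
            M s ^ i * (-(P s * M s)) * M s ^ (m - 1 - i)).trace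
          = -(∑ j ∈ Finset.range m, (P s * (M s) ^ j * P s * (M s) ^ (m - j)).trace) := by
        rw [Finset.mul_sum, Matrix.trace_sum, ← Finset.sum_neg_distrib]
        refine Finset.sum_congr rfl fun i hi => ?_
        rw [Finset.mem_range] at hi
        have h1 : P s * (M s ^ i * (-(P s * M s)) * M s ^ (m - 1 - i))
            = -(P s * (M s) ^ i * P s * (M s) ^ (m - i)) := by
          have hexp : m - 1 - i + 1 = m - i := by omega
          simp only [mul_neg, neg_mul]
          congr 1
          simp only [Matrix.mul_assoc]
          congr 3
          rw [← pow_succ', hexp]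
        rw [h1, Matrix.trace_neg]
      rw [hfirst, hsecond, hQcdef]
      ring
    replace hre := hre.congr_deriv (congrArg Complex.re hval)
    exact hre
  -- nonnegativity of the second derivative
  have hg₂nn : ∀ s ∈ Set.Icc (0 : ℝ) 1, 0 ≤ ((m : ℂ) * Qc s).re := by
    intro s hs
    have hAinv : (A s)⁻¹ = N s := Matrix.nonsing_inv_eq_ringInverse _
    have hki := key_ineq (hA_pd s hs) hR hD m hm
    rw [hAinv] at hki
    have hQre : 0 ≤ (Qc s).re := hki
    have : ((m : ℂ) * Qc s).re = (m : ℝ) * (Qc s).re := by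
      simp [Complex.mul_re]
    rw [this]
    exact mul_nonneg (by positivity) hQre
  -- value of g₁ at 0
  have hA0 : A 0 = Δ := by rw [hAdef]; simp
  have hN0 : N 0 = Δ⁻¹ := by
    rw [hNdef]; simp only; rw [hA0]
    exact (Matrix.nonsing_inv_eq_ringInverse Δ).symm
  have hg₁zero : g₁ 0 = 0 := by
    have htr0 : (P 0 * (M 0) ^ m).trace = 0 := by
      have hP0 : P 0 = Δ⁻¹ * R := by rw [hPdef]; simp only; rw [hN0]
      have hM0 : M 0 = Δ⁻¹ * D := by rw [hMdef]; simp only; rw [hN0]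
      rw [hP0, hM0]
      set dd : Fin n → ℂ := Δ.diag with hdd
      set Dd : Fin n → ℂ := D.diag with hDd
      have hdg : Δ = Matrix.diagonal dd := (hΔdiag.diagonal_diag).symm
      have hDdg : D = Matrix.diagonal Dd := (hDdiag.diagonal_diag).symm
      have hΔinv : Δ⁻¹ = Matrix.diagonal (Ring.inverse dd) := by
        rw [hdg, Matrix.inv_diagonal]
      rw [hΔinv, hDdg, Matrix.diagonal_mul_diagonal, Matrix.diagonal_pow]
      unfold Matrix.trace
      refine Finset.sum_eq_zero fun p _ => ?_
      rw [Matrix.diag_apply, Matrix.mul_diagonal, Matrix.diagonal_mul, hR0, mul_zero, zero_mul]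
    rw [hg₁def]
    simp only
    rw [htr0, mul_zero, Complex.zero_re]
  -- monotonicity arguments
  have h01 : (0 : ℝ) ∈ Set.Icc (0 : ℝ) 1 := Set.mem_Icc.mpr ⟨le_refl 0, zero_le_one⟩
  have h11 : (1 : ℝ) ∈ Set.Icc (0 : ℝ) 1 := Set.mem_Icc.mpr ⟨zero_le_one, le_refl 1⟩
  have hg₁mono : MonotoneOn g₁ (Set.Icc 0 1) := by
    apply monotoneOn_of_deriv_nonneg (convex_Icc 0 1)
    · intro x hx
      exact ((hG₁der x (hunit x hx)).continuousAt).continuousWithinAt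
    · rw [interior_Icc]
      intro x hx
      exact ((hG₁der x (hunit x (Set.Ioo_subset_Icc_self hx))).differentiableAt).differentiableWithinAt
    · rw [interior_Icc]
      intro x hx
      rw [(hG₁der x (hunit x (Set.Ioo_subset_Icc_self hx))).deriv]
      exact hg₂nn x (Set.Ioo_subset_Icc_self hx)
  have hg₁nn : ∀ x ∈ Set.Icc (0 : ℝ) 1, 0 ≤ g₁ x := by
    intro x hx
    have := hg₁mono h01 hx hx.1
    rwa [hg₁zero] at this
  have hgmono : MonotoneOn g (Set.Icc 0 1) := by
    apply monotoneOn_of_deriv_nonneg (convex_Icc 0 1)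
    · intro x hx
      exact ((hGder x (hunit x hx)).continuousAt).continuousWithinAt
    · rw [interior_Icc]
      intro x hx
      exact ((hGder x (hunit x (Set.Ioo_subset_Icc_self hx))).differentiableAt).differentiableWithinAt
    · rw [interior_Icc]
      intro x hx
      rw [(hGder x (hunit x (Set.Ioo_subset_Icc_self hx))).deriv]
      exact hg₁nn x (Set.Ioo_subset_Icc_self hx)
  have hfin := hgmono h01 h11 zero_le_one
  -- identify the endpoints
  have hA1 : A 1 = Δ + R := by rw [hAdef]; simp
  have hN1 : N 1 = (Δ + R)⁻¹ := by
    rw [hNdef]; simp only; rw [hA1]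
    exact (Matrix.nonsing_inv_eq_ringInverse _).symm
  have hg0 : g 0 = ((Δ⁻¹ * D) ^ m).trace.re := by
    rw [hgdef]; simp only; rw [hMdef]; simp only; rw [hN0]
  have hg1 : g 1 = (((Δ + R)⁻¹ * D) ^ m).trace.re := by
    rw [hgdef]; simp only; rw [hMdef]; simp only; rw [hN1]
  rw [← hg0, ← hg1]
  exact hfin

end Tidc

/-- for `C` positive definite, `D` hermitian diagonal, `t ≥ 0` and `k ≥ 1`,
`Tr[((C + tI)⁻¹ D)^{2k}] ≥ Tr[((C_Diag + tI)⁻¹ D)^{2k}]`, where `C_Diag` is the diagonal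
part of `C` (both traces are real; the inequality is stated for their real parts). -/
theorem trace_inverse_diag_comparison (n : ℕ) (C D : Matrix (Fin n) (Fin n) ℂ)
    (hC : C.PosDef) (hD : D.IsHermitian) (hDdiag : D.IsDiag)
    (t : ℝ) (ht : 0 ≤ t) (k : ℕ) (hk : 1 ≤ k) :
    ((((Matrix.diagonal fun i => C i i) + (t : ℂ) • (1 : Matrix (Fin n) (Fin n) ℂ))⁻¹ * D)
        ^ (2 * k)).trace.re ≤
      (((C + (t : ℂ) • (1 : Matrix (Fin n) (Fin n) ℂ))⁻¹ * D) ^ (2 * k)).trace.re := by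
  classical
  have hdiag_pos : ∀ i, 0 < C i i := by
    intro i
    have hne : (Pi.single i 1 : Fin n → ℂ) ≠ 0 := by
      intro h
      have := congrFun h i
      simp at this
    have h2 := hC.dotProduct_mulVec_pos hne
    have h3 : dotProduct (star (Pi.single i 1 : Fin n → ℂ)) (C *ᵥ Pi.single i 1)
        = C i i := by
      simp only [dotProduct, Matrix.mulVec_single, Pi.star_apply, Pi.single_apply,
        mul_one]
      rw [Finset.sum_eq_single i]
      · simp
      · intro b _ hb
        simp [hb]
      · intro h
        exact absurd (Finset.mem_univ i) h
    rwa [h3] at h2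
  have hCijC : ∀ i, (starRingEnd ℂ) (C i i) = C i i := by
    intro i
    have := hC.1.apply i i
    rwa [starRingEnd_apply]
  have hdiag_herm : (Matrix.diagonal fun i => C i i).IsHermitian := by
    refine Matrix.isHermitian_diagonal_of_self_adjoint _ ?_
    funext i
    have := hCijC i
    rw [starRingEnd_apply] at this
    exact this
  set Δm : Matrix (Fin n) (Fin n) ℂ :=
    (Matrix.diagonal fun i => C i i) + (t : ℂ) • (1 : Matrix (Fin n) (Fin n) ℂ) with hΔm
  set Rm : Matrix (Fin n) (Fin n) ℂ := C - Matrix.diagonal fun i => C i i with hRm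
  have hΔm_diag : Δm = Matrix.diagonal (fun i => C i i + (t : ℂ)) := by
    rw [hΔm, Matrix.smul_one_eq_diagonal, Matrix.diagonal_add]
  have hΔ_pd : Δm.PosDef := by
    rw [hΔm_diag]
    refine Matrix.posDef_diagonal_iff.mpr fun i => ?_
    have h1 : 0 ≤ (t : ℂ) := by
      rw [Complex.zero_le_real]
      exact ht
    exact add_pos_of_pos_of_nonneg (hdiag_pos i) h1
  have hΔ_isdiag : Δm.IsDiag := by
    rw [hΔm_diag]
    exact Matrix.isDiag_diagonal _
  have hsum_eq : Δm + Rm = C + (t : ℂ) • 1 := by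
    rw [hΔm, hRm]
    abel
  have hsum_pd : (Δm + Rm).PosDef := by
    rw [hsum_eq]
    refine hC.add_posSemidef ?_
    rw [Matrix.smul_one_eq_diagonal]
    refine Matrix.posSemidef_diagonal_iff.mpr fun i => ?_
    rw [Complex.zero_le_real]
    exact ht
  have hR_herm : Rm.IsHermitian := hC.1.sub hdiag_herm
  have hR0 : ∀ i, Rm i i = 0 := by
    intro i
    rw [hRm]
    simp [Matrix.sub_apply]
  have hm : Even (2 * k) := ⟨k, two_mul k⟩
  have hm0 : 2 * k ≠ 0 := by omega
  have := Tidc.main_aux Δm Rm D hΔ_pd hΔ_isdiag hsum_pd hR_herm hR0 hD hDdiag (2 * k) hm hm0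
  rwa [hsum_eq] at this
end
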